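/- arXiv:1009.4711 — 10 statements merged into one kernel-verified Lean document; each statement's English description precedes it below -/
import Mathlib

section
/- Let n ≥ 0 and t ≥ 1, let P be a graded poset of rank n+1, and let R = Rees(P, T_{t,n+1}). Then for every subset S ⊆ {1,…,n}, the flag f-vector entry satisfies f_S(R) = w(S)·f_S(P). -/
/-- The `t`-analogue `[k] = 1 + t + ⋯ + t^(k-1)`. -/
def tnum (t k : ℕ) : ℕ := ∑ i ∈ Finset.range k, t ^ i

/-- Auxiliary product defining the weight `w`: given the previous entry `p` and the
sorted list of remaining entries, multiply the factors `[s - p + 1]`. -/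
def wAux (t : ℕ) : ℕ → List ℕ → ℕ
  | _, [] => 1
  | p, s :: rest => tnum t (s - p + 1) * wAux t s rest

/-- The weight `w(S) = [s₁]·[s₂-s₁+1]⋯[s_k-s_{k-1}+1]` for `S = {s₁ < ⋯ < s_k}`,
with `w(∅) = 1`. -/
def wWeight (t : ℕ) (S : Finset ℕ) : ℕ := wAux t 1 (S.sort (· ≤ ·))

/-- The weight `v(S) = w(S ∪ {n+1}) - w(S)` for nonempty `S ⊆ {1,…,n}`, and
`v(∅) = t·[n]`. -/
def vWeight (t n : ℕ) (S : Finset ℕ) : ℤ :=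
  if S = ∅ then t * tnum t n else (wWeight t (S ∪ {n + 1}) : ℤ) - (wWeight t S : ℤ)

/-- The flag `f`-vector entry `f_S` of a bounded poset with rank function `rk`:
the number of chains `⊥ < x₁ < ⋯ < x_k < ⊤` whose multiset of ranks is exactly `S`,
encoded as strictly increasing rank-respecting functions `S → β`. -/
noncomputable def flagF {β : Type} [PartialOrder β] [BoundedOrder β] (rk : β → ℕ) (S : Finset ℕ) : ℕ :=
  Nat.card {g : {s : ℕ // s ∈ S} → β //
    (∀ s, rk (g s) = s.val) ∧
    (∀ s s' : {s : ℕ // s ∈ S}, s.val < s'.val → g s < g s') ∧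
    (∀ s, ⊥ < g s ∧ g s < ⊤)}

/-- The proper part of the Rees product of a graded poset `(α, rk)` of rank `n+1`
with the `t`-ary tree `T_{t,n+1}`: pairs `(p, w)` with `p ≠ ⊥`, `w` a word of length
at most `n` over a `t`-letter alphabet, and `|w| ≤ rk p - 1`. -/
def ReesElt (α : Type) [PartialOrder α] [OrderBot α] (rk : α → ℕ) (t n : ℕ) : Type :=
  {pw : α × List (Fin t) // pw.1 ≠ ⊥ ∧ pw.2.length ≤ n ∧ pw.2.length + 1 ≤ rk pw.1}

/-- The Rees order: `(p,w) ≤ (p',w')` iff `p ≤ p'`, `w` is a prefix of `w'`, and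
`rk p' - rk p ≥ |w'| - |w|`. -/
instance (α : Type) [PartialOrder α] [OrderBot α] (rk : α → ℕ) (t n : ℕ) :
    PartialOrder (ReesElt α rk t n) where
  le a b := a.1.1 ≤ b.1.1 ∧ a.1.2 <+: b.1.2 ∧
    rk a.1.1 + b.1.2.length ≤ rk b.1.1 + a.1.2.length
  le_refl a := ⟨le_refl _, List.prefix_refl _, le_refl _⟩
  le_trans a b c hab hbc :=
    ⟨hab.1.trans hbc.1, hab.2.1.trans hbc.2.1, by
      have h1 := hab.2.2; have h2 := hbc.2.2; omega⟩
  le_antisymm a b hab hba := by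
    apply Subtype.ext
    have h1 : a.1.1 = b.1.1 := le_antisymm hab.1 hba.1
    have h2 : a.1.2 = b.1.2 := hab.2.1.eq_of_length_le hba.2.1.length_le
    exact Prod.ext h1 h2

/-- The Rees product `Rees(P, T_{t,n+1})`: the proper part together with an adjoined
minimum `⊥` and maximum `⊤`. -/
abbrev ReesTree (α : Type) [PartialOrder α] [OrderBot α] (rk : α → ℕ) (t n : ℕ) : Type :=
  WithBot (WithTop (ReesElt α rk t n))

/-- The rank function of `Rees(P, T_{t,n+1})`: `ρ(⊥) = 0`, `ρ(⊤) = n+2`, and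
`ρ(p,w) = rk p`. -/
noncomputable def reesRank (α : Type) [PartialOrder α] [OrderBot α] (rk : α → ℕ) (t n : ℕ) :
    ReesTree α rk t n → ℕ :=
  WithBot.recBotCoe 0 (WithTop.recTopCoe (n + 2) (fun a => rk a.1.1))

/-! A chain `(x_s, w_s)_{s ∈ S}` of `Rees(P, T_{t,n+1})` with ranks `S` is exactly a chain `(x_s)`
of `P` with ranks `S` together with words `w_s`, independent of the `x_s`, such that each `w_s`
extends the previous word `w_{s'}` by at most `s - s'` letters (and `|w_{s₁}| ≤ s₁ - 1`).
Choosing the words from the bottom up, the word at `s` ranges freely over the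
`1 + t + ⋯ + t^(s-s')` extensions, so there are `w(S)` word systems. -/

open Finset

theorem card_list_length_le (t d : ℕ) :
    Nat.card {w : List (Fin t) // w.length ≤ d} = tnum t (d + 1) := by
  have e : {w : List (Fin t) // w.length ≤ d} ≃ Σ k : Fin (d + 1), Fin k → Fin t :=
    (List.equivSigmaTuple.subtypeEquiv fun _ => Nat.lt_succ_iff.symm).trans
      (Equiv.subtypeSigmaEquiv _ (· < d + 1)) |>.trans
      (Equiv.sigmaCongrLeft' Fin.equivSubtype.symm)
  rw [Nat.card_congr e, Nat.card_sigma]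
  simp [tnum, Fin.sum_univ_eq_sum_range (t ^ ·)]

section WordChain

variable {t : ℕ}

/-- The Rees order on (rank, word) pairs. -/
def WordLE (p : ℕ) (u : List (Fin t)) (s : ℕ) (w : List (Fin t)) : Prop :=
  u <+: w ∧ p + w.length ≤ s + u.length

/-- The word components of a chain with ranks `S` in `Rees(C, T_t)`, `C` a chain, lying strictly
above `(p, [])`. -/
def IsWordChain (p : ℕ) (S : Finset ℕ) (h : {s : ℕ // s ∈ S} → List (Fin t)) : Prop :=
  (∀ s, p + (h s).length ≤ s.val) ∧
    ∀ s s' : {s : ℕ // s ∈ S}, s.val < s'.val → WordLE s.val (h s) s'.val (h s')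

variable (t) in
def WordChain (p : ℕ) (S : Finset ℕ) : Type :=
  {h : {s : ℕ // s ∈ S} → List (Fin t) // IsWordChain p S h}

variable {p a : ℕ} {S : Finset ℕ}

theorem IsWordChain.tail {h : {s : ℕ // s ∈ insert a S} → List (Fin t)}
    (hh : IsWordChain p (insert a S) h) (ha : ∀ x ∈ S, a < x) :
    IsWordChain a S fun s =>
      (h ⟨s, mem_insert_of_mem s.2⟩).drop (h ⟨a, mem_insert_self a S⟩).length := by
  constructor
  · rintro ⟨s, hs⟩
    have hlen := (hh.2 ⟨a, mem_insert_self a S⟩ ⟨s, mem_insert_of_mem hs⟩ (ha s hs)).2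
    have has := ha s hs
    simp only [List.length_drop] at hlen ⊢
    omega
  · rintro ⟨s, hs⟩ ⟨s', hs'⟩ hss
    have ⟨hpre, _⟩ := hh.2 ⟨a, mem_insert_self a S⟩ ⟨s, mem_insert_of_mem hs⟩ (ha s hs)
    have ⟨hss', hlen⟩ := hh.2 ⟨s, mem_insert_of_mem hs⟩ ⟨s', mem_insert_of_mem hs'⟩ hss
    refine ⟨hss'.drop _, ?_⟩
    have := hpre.length_le
    simp only [List.length_drop] at hlen hss ⊢
    omega

theorem IsWordChain.cons {w : List (Fin t)} {h : {s : ℕ // s ∈ S} → List (Fin t)}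
    (hh : IsWordChain a S h) (hw : p + w.length ≤ a) (ha : ∀ x ∈ S, a < x) :
    IsWordChain p (insert a S) fun s => if hs : s.val ∈ S then w ++ h ⟨s, hs⟩ else w := by
  have haS : a ∉ S := fun h => (ha a h).false
  constructor
  · rintro ⟨s, hs⟩
    rcases mem_insert.1 hs with rfl | hsS
    · simpa [haS] using hw
    · have hlen := hh.1 ⟨s, hsS⟩
      simp only [hsS, dif_pos, List.length_append] at hlen ⊢
      omega
  · rintro ⟨s, hs⟩ ⟨s', hs'⟩ hss
    simp only at hss
    rcases mem_insert.1 hs' with rfl | hs'S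
    · rcases mem_insert.1 hs with rfl | hsS
      · exact absurd hss (lt_irrefl _)
      · exact absurd (ha s hsS) hss.asymm
    have hs'len := hh.1 ⟨s', hs'S⟩
    simp only at hs'len
    rcases mem_insert.1 hs with rfl | hsS
    · simp only [haS, hs'S, dif_pos, dif_neg, not_false_eq_true, WordLE, List.length_append]
      exact ⟨List.prefix_append _ _, by omega⟩
    · have ⟨hpre, hlen⟩ := hh.2 ⟨s, hsS⟩ ⟨s', hs'S⟩ hss
      simp only [hsS, hs'S, dif_pos, WordLE, List.prefix_append_right_inj,
        List.length_append] at hlen ⊢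
      exact ⟨hpre, by omega⟩

/-- Splitting off the word at the least rank `a`; the other words are stored with that word
removed from their front. -/
def wordChainInsertEquiv (ha : ∀ x ∈ S, a < x) :
    WordChain t p (insert a S) ≃ {w : List (Fin t) // p + w.length ≤ a} × WordChain t a S where
  toFun h := (⟨h.1 ⟨a, mem_insert_self a S⟩, h.2.1 _⟩, ⟨_, h.2.tail ha⟩)
  invFun wh := ⟨_, wh.2.2.cons wh.1.2 ha⟩
  left_inv h := by
    refine Subtype.ext (funext fun ⟨s, hs⟩ => ?_)
    rcases mem_insert.1 hs with rfl | hsS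
    · simp [(ha s).mt (lt_irrefl s)]
    · have hpre := (h.2.2 ⟨a, mem_insert_self a S⟩ ⟨s, hs⟩ (ha s hsS)).1
      simpa [hsS] using (List.prefix_iff_eq_append.1 hpre)
  right_inv wh := by
    have haS : a ∉ S := fun h => (ha a h).false
    refine Prod.ext (Subtype.ext ?_) (Subtype.ext (funext fun s => ?_)) <;> simp [haS]

theorem card_wordChain (hp : ∀ x ∈ S, p ≤ x) :
    Nat.card (WordChain t p S) = wAux t p (S.sort (· ≤ ·)) := by
  induction S using Finset.induction_on_min generalizing p with
  | empty =>
    rw [sort_empty, wAux, Nat.card_eq_one_iff_unique]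
    exact ⟨⟨fun _ _ => Subtype.ext (funext isEmptyElim)⟩, ⟨⟨isEmptyElim, isEmptyElim, isEmptyElim⟩⟩⟩
  | insert a S ha ih =>
    have hpa := hp a (mem_insert_self a S)
    rw [Nat.card_congr (wordChainInsertEquiv ha), Nat.card_prod,
      ih fun x hx => (ha x hx).le,
      sort_insert (· ≤ ·) (fun x hx => (ha x hx).le) fun h => (ha a h).false, wAux,
      ← card_list_length_le, Nat.card_congr (Equiv.subtypeEquivRight fun w : List (Fin t) =>
        (by omega : p + w.length ≤ a ↔ w.length ≤ a - p))]

end WordChain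

section RankedChain

def RankedChain {β : Type*} [Preorder β] (rk : β → ℕ) (S : Finset ℕ) : Type _ :=
  {g : {s : ℕ // s ∈ S} → β // (∀ s, rk (g s) = s.val) ∧
    ∀ s s' : {s : ℕ // s ∈ S}, s.val < s'.val → g s < g s'}

theorem flagF_eq_card_rankedChain {β : Type} [PartialOrder β] [BoundedOrder β] {rk : β → ℕ}
    {S : Finset ℕ} (hS : ∀ s ∈ S, rk ⊥ < s ∧ s < rk ⊤) :
    flagF rk S = Nat.card (RankedChain rk S) := by
  refine Nat.card_congr (Equiv.subtypeEquivRight fun g => ⟨fun h => ⟨h.1, h.2.1⟩, fun h => ?_⟩)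
  refine ⟨h.1, h.2, fun s => ⟨bot_lt_iff_ne_bot.2 fun hb => ?_, lt_top_iff_ne_top.2 fun ht => ?_⟩⟩
  · exact (hS s s.2).1.ne' (by rw [← h.1 s, hb])
  · exact (hS s s.2).2.ne (by rw [← h.1 s, ht])

theorem card_rankedChain_of_orderEmbedding {β γ : Type*} [Preorder β] [Preorder γ] (e : β ↪o γ)
    {rk : γ → ℕ} {rk' : β → ℕ} {S : Finset ℕ} (hrk : ∀ x, rk (e x) = rk' x)
    (hS : ∀ x, rk x ∈ S → x ∈ Set.range e) :
    Nat.card (RankedChain rk' S) = Nat.card (RankedChain rk S) := by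
  refine Nat.card_eq_of_bijective (fun g => ⟨e ∘ g.1, fun s => (hrk _).trans (g.2.1 s),
      fun s s' h => e.lt_iff_lt.2 (g.2.2 s s' h)⟩)
    ⟨fun g g' h => Subtype.ext (funext fun s => e.injective (congrFun (congrArg Subtype.val h) s)),
      fun g => ?_⟩
  choose f hf using fun s => hS (g.1 s) (by rw [g.2.1 s]; exact s.2)
  refine ⟨⟨f, fun s => ?_, fun s s' h => ?_⟩, Subtype.ext (funext hf)⟩
  · rw [← hrk, hf, g.2.1]
  · rw [← e.lt_iff_lt, hf, hf]
    exact g.2.2 s s' h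

end RankedChain

section Rees

variable {α : Type} [PartialOrder α] [OrderBot α] {rk : α → ℕ} {t n : ℕ}

theorem ReesElt.lt_iff_of_rk_lt {x y : ReesElt α rk t n} (h : rk x.1.1 < rk y.1.1) :
    x < y ↔ x.1.1 < y.1.1 ∧ WordLE (rk x.1.1) x.1.2 (rk y.1.1) y.1.2 := by
  have hne : x.1.1 ≠ y.1.1 := fun e => h.ne (congrArg rk e)
  rw [lt_iff_le_and_ne, lt_iff_le_and_ne (a := x.1.1), and_right_comm]
  simp only [hne, ne_eq, not_false_eq_true, and_true]
  exact and_iff_left_of_imp fun _ e => hne (congrArg (fun z => z.1.1) e)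

def reesChainEquiv (hbot : rk ⊥ = 0) {S : Finset ℕ} (hS : ∀ s ∈ S, 1 ≤ s ∧ s ≤ n) :
    RankedChain (fun x : ReesElt α rk t n => rk x.1.1) S ≃ RankedChain rk S × WordChain t 1 S where
  toFun g :=
    have hrk (s) : rk (g.1 s).1.1 = s.val := g.2.1 s
    have hlt {s s'} (h : s.val < s'.val) :=
      (ReesElt.lt_iff_of_rk_lt (by rwa [hrk, hrk])).1 (g.2.2 s s' h)
    (⟨fun s => (g.1 s).1.1, hrk, fun _ _ h => (hlt h).1⟩,
      ⟨fun s => (g.1 s).1.2,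
        fun s => by have := (g.1 s).2.2.2; rw [hrk] at this; dsimp only; omega,
        fun s s' h => by simpa only [hrk] using (hlt h).2⟩)
  invFun fh :=
    have hrk := fh.1.2.1
    have hlen (s) : 1 + (fh.2.1 s).length ≤ s.val := fh.2.2.1 s
    ⟨fun s => ⟨(fh.1.1 s, fh.2.1 s),
        fun hb => by
          have := hS s s.2; have := hrk s; dsimp only at hb; rw [hb, hbot] at this; omega,
        by have := hS s s.2; have := hlen s; dsimp only; omega,
        by have := hlen s; dsimp only; rw [hrk s]; omega⟩,
      hrk, fun s s' h => (ReesElt.lt_iff_of_rk_lt (by rwa [hrk, hrk])).2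
        ⟨fh.1.2.2 s s' h, by simpa only [hrk] using fh.2.2.2 s s' h⟩⟩
  left_inv _ := rfl
  right_inv _ := rfl

theorem mem_range_coe_of_reesRank {x : ReesTree α rk t n} (h₀ : reesRank α rk t n x ≠ 0)
    (h₁ : reesRank α rk t n x ≠ n + 2) :
    x ∈ Set.range (WithTop.coeOrderHom.trans WithBot.coeOrderHom) := by
  rcases x with _ | _ | x
  · exact absurd rfl h₀
  · exact absurd rfl h₁
  · exact ⟨x, rfl⟩

end Rees

theorem statement1_general (n t : ℕ)
    (α : Type) [PartialOrder α] [BoundedOrder α]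
    (rk : α → ℕ) (hbot : rk ⊥ = 0) (htop : rk ⊤ = n + 1)
    (S : Finset ℕ) (hS : S ⊆ Finset.Icc 1 n) :
    flagF (reesRank α rk t n) S = wWeight t S * flagF rk S := by
  have hS' (s) (hs : s ∈ S) : 1 ≤ s ∧ s ≤ n := mem_Icc.1 (hS hs)
  have hrees_bot : reesRank α rk t n ⊥ = 0 := rfl
  have hrees_top : reesRank α rk t n ⊤ = n + 2 := rfl
  rw [flagF_eq_card_rankedChain fun s hs => by rw [hrees_bot, hrees_top]; have := hS' s hs; omega,
    flagF_eq_card_rankedChain fun s hs => by rw [hbot, htop]; have := hS' s hs; omega,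
    ← card_rankedChain_of_orderEmbedding _ (rk' := fun x : ReesElt α rk t n => rk x.1.1)
      (fun _ => rfl) fun x hx => mem_range_coe_of_reesRank (by have := hS' _ hx; omega)
        (by have := hS' _ hx; omega),
    Nat.card_congr (reesChainEquiv hbot hS'), Nat.card_prod,
    card_wordChain fun s hs => (hS' s hs).1, mul_comm, wWeight]

theorem statement1 (n t : ℕ) (ht : 1 ≤ t)
    (α : Type) [Fintype α] [PartialOrder α] [BoundedOrder α]
    (rk : α → ℕ) (hbot : rk ⊥ = 0) (htop : rk ⊤ = n + 1)
    (hcov : ∀ x y : α, x ⋖ y → rk y = rk x + 1)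
    (S : Finset ℕ) (hS : S ⊆ Finset.Icc 1 n) :
    flagF (reesRank α rk t n) S = wWeight t S * flagF rk S :=
  statement1_general n t α rk hbot htop S hS
end

section
/- Fix an integer t ≥ 1 and an integer n ≥ 0. For every subset S ⊆ {1,…,n}, the weight v satisfies v(S) = v(S^rev), where S^rev = {n+1−s : s ∈ S}. -/
/-- `vAux t p [s₁, …, s_k] q = [s₁ - p + 1]⋯[s_k - s_{k-1} + 1]·[q - s_k]`. -/
def vAux (t : ℕ) : ℕ → List ℕ → ℕ → ℕ
  | p, [], q => tnum t (q - p)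
  | p, s :: rest, q => tnum t (s - p + 1) * vAux t s rest q

lemma tnum_succ (t m : ℕ) : tnum t (m + 1) = 1 + t * tnum t m := by
  rw [tnum, geom_sum_succ, add_comm, tnum]

lemma wAux_append_singleton (t p : ℕ) (l : List ℕ) (q : ℕ) :
    wAux t p (l ++ [q]) = wAux t p l + t * vAux t p l q := by
  induction l generalizing p with
  | nil => simp [wAux, vAux, tnum_succ]
  | cons s rest ih =>
    simp only [List.cons_append, wAux, vAux, ih]
    ring

lemma vAux_append_singleton (t p : ℕ) (l : List ℕ) (x q : ℕ) (h : ∀ a ∈ p :: l, a ≤ x) :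
    vAux t p (l ++ [x]) q = vAux t p l (x + 1) * tnum t (q - x) := by
  induction l generalizing p with
  | nil =>
    have hpx : x - p + 1 = x + 1 - p := by
      have := h p List.mem_cons_self
      omega
    simp [vAux, hpx]
  | cons s rest ih =>
    simp only [List.cons_append, vAux]
    rw [ih s (fun a ha => h a (List.mem_cons_of_mem p ha)), mul_assoc]

lemma vAux_reverse (t c p q : ℕ) (l : List ℕ) (hl : (p :: l).Pairwise (· ≤ ·))
    (hlq : ∀ s ∈ l, s < q) (hqc : q ≤ c + 1) :
    vAux t p l q = vAux t (c + 1 - q) (l.map (c - ·)).reverse (c + 1 - p) := by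
  induction l generalizing p with
  | nil =>
    have hqp : q - p = c + 1 - p - (c + 1 - q) := by omega
    simp [vAux, hqp]
  | cons s rest ih =>
    obtain ⟨hp, hs⟩ := List.pairwise_cons.1 hl
    have hps : p ≤ s := hp s List.mem_cons_self
    have hsr : ∀ r ∈ rest, s ≤ r := (List.pairwise_cons.1 hs).1
    have hsq : s < q := hlq s List.mem_cons_self
    have hlast : ∀ a ∈ (c + 1 - q) :: (rest.map (c - ·)).reverse, a ≤ c - s := by
      simp only [List.mem_cons, List.mem_reverse, List.mem_map]
      rintro a (rfl | ⟨r, hr, rfl⟩)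
      · omega
      · have := hsr r hr
        omega
    rw [List.map_cons, List.reverse_cons, vAux_append_singleton t _ _ _ _ hlast, vAux,
      ih s hs (fun r hr => hlq r (List.mem_cons_of_mem s hr))]
    have hfirst : c + 1 - p - (c - s) = s - p + 1 := by omega
    have hgap : c + 1 - s = c - s + 1 := by omega
    rw [hfirst, hgap, mul_comm]

lemma sort_toFinset_of_pairwise_lt {α : Type*} [LinearOrder α] {l : List α}
    (hl : l.Pairwise (· < ·)) : l.toFinset.sort (· ≤ ·) = l :=
  (List.toFinset_sort _ hl.nodup).2 (hl.imp le_of_lt)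

lemma sort_union_singleton_of_forall_lt {α : Type*} [LinearOrder α] (S : Finset α) (m : α)
    (h : ∀ s ∈ S, s < m) : (S ∪ {m}).sort (· ≤ ·) = S.sort (· ≤ ·) ++ [m] := by
  have hS : S ∪ {m} = (S.sort (· ≤ ·) ++ [m]).toFinset := by simp
  rw [hS, sort_toFinset_of_pairwise_lt]
  refine List.pairwise_append.2 ⟨(Finset.sortedLT_sort S).pairwise, by simp, ?_⟩
  simpa using h

lemma sort_image_tsub (m : ℕ) (S : Finset ℕ) (h : ∀ s ∈ S, s ≤ m) :
    (S.image (m - ·)).sort (· ≤ ·) = ((S.sort (· ≤ ·)).map (m - ·)).reverse := by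
  have hS : S.image (m - ·) = ((S.sort (· ≤ ·)).map (m - ·)).reverse.toFinset := by
    ext; simp
  rw [hS, sort_toFinset_of_pairwise_lt]
  rw [List.pairwise_reverse, List.pairwise_map]
  refine ((Finset.sortedLT_sort S).pairwise).imp_of_mem fun ha hb hab => ?_
  have := h _ ((Finset.mem_sort _).1 hb)
  omega

lemma vWeight_eq_mul_vAux (t n : ℕ) (S : Finset ℕ) (hS : ∀ s ∈ S, s ≤ n) :
    vWeight t n S = t * vAux t 1 (S.sort (· ≤ ·)) (n + 1) := by
  rcases S.eq_empty_or_nonempty with rfl | hne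
  · simp [vWeight, vAux]
  · rw [vWeight, if_neg hne.ne_empty, wWeight, wWeight,
      sort_union_singleton_of_forall_lt S (n + 1) (fun s hs => Nat.lt_succ_of_le (hS s hs)),
      wAux_append_singleton]
    push_cast
    ring

theorem statement4_general (t : ℕ) (n : ℕ) (S : Finset ℕ)
    (hS : S ⊆ Finset.Icc 1 n) :
    vWeight t n S = vWeight t n (S.image (fun s => n + 1 - s)) := by
  have hS_mem : ∀ s ∈ S, 1 ≤ s ∧ s ≤ n := fun s hs => Finset.mem_Icc.1 (hS hs)
  have hS_image : ∀ s ∈ S.image (fun s => n + 1 - s), s ≤ n := by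
    simp only [Finset.mem_image]
    rintro _ ⟨s, hs, rfl⟩
    have := hS_mem s hs
    omega
  rw [vWeight_eq_mul_vAux t n S (fun s hs => (hS_mem s hs).2),
    vWeight_eq_mul_vAux t n _ hS_image,
    sort_image_tsub (n + 1) S (fun s hs => by have := hS_mem s hs; omega)]
  have hsorted : (1 :: S.sort (· ≤ ·)).Pairwise (· ≤ ·) :=
    List.pairwise_cons.2 ⟨fun s hs => (hS_mem s ((Finset.mem_sort _).1 hs)).1,
      Finset.pairwise_sort S _⟩
  have hreverse := vAux_reverse t (n + 1) 1 (n + 1) (S.sort (· ≤ ·)) hsorted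
    (fun s hs => Nat.lt_succ_of_le (hS_mem s ((Finset.mem_sort _).1 hs)).2) (Nat.le_succ _)
  simp only [Nat.add_sub_cancel_left, add_tsub_cancel_right] at hreverse
  rw [hreverse]

theorem statement4 (t : ℕ) (ht : 1 ≤ t) (n : ℕ) (S : Finset ℕ)
    (hS : S ⊆ Finset.Icc 1 n) :
    vWeight t n S = vWeight t n (S.image (fun s => n + 1 - s)) :=
  statement4_general t n S hS
end

section
/- Let n ≥ 0 be even and t ≥ 1, and let P be a graded poset of (odd) rank n+1. Then the integer 1+t divides μ(Rees(P, T_{t,n+1})). -/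
/-!
Write `m(e) = μ(0̂, e)` on the proper part of `Rees(P, T_{t,n+1})`. Forgetting letters maps the
lower interval of `(p, w)` bijectively onto the lower interval of `(p, |w|)` in
`Rees(P, T_{1,n+1})`, so `m(p, w) = M(p, |w|)` for a function `M` satisfying the Möbius recursion
of `Rees(P, T_{1,n+1})`, and counting words gives `μ = -1 - ∑ t ^ j M(p, j)`. Modulo `1 + t`
we may replace `t ^ j` by `(-1) ^ j`, and `∑ (-1) ^ j M(p, j) = -1`: sum the recursion of `M`
against the weights `b(p) (-1) ^ k`, where `b` sums to `1` over `{p ≥ q | ρ p ≡ ρ q mod 2}` for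
every `q`, which can be arranged because `ρ 1̂ = n + 1` is odd.
-/

open Finset
open scoped Classical

theorem strictMono_of_covBy_add_one {α : Type} [PartialOrder α] [Finite α] {rk : α → ℕ}
    (hcov : ∀ x y : α, x ⋖ y → rk y = rk x + 1) : StrictMono rk := by
  intro x y hxy
  induction x using WellFoundedGT.induction with
  | _ x ih =>
    obtain ⟨z, hxz, hzy⟩ := exists_covBy_le_of_lt hxy
    rw [Nat.lt_iff_add_one_le, ← hcov x z hxz]
    rcases hzy.eq_or_lt with rfl | hzy
    · rfl
    · exact (ih z hxz.lt hzy).le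

theorem sum_Icc_neg_one_pow (j d : ℕ) :
    ∑ k ∈ Icc j (j + d), (-1 : ℤ) ^ k = if Even d then (-1) ^ j else 0 := by
  rw [← Ico_add_one_right_eq_Icc, sum_Ico_eq_sum_range, add_assoc, Nat.add_sub_cancel_left]
  simp_rw [pow_add, ← mul_sum, neg_one_geom_sum]
  simp [Nat.even_add_one, -Nat.not_even_iff_odd, ite_not]

theorem sum_mul_eq_neg_sum_of_upper_sums {X : Type} (Q : Finset X) (r : X → X → Prop)
    {M g c : X → ℤ} (hM : ∀ y ∈ Q, 1 + ∑ x ∈ Q with r x y, M x = 0)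
    (hg : ∀ x ∈ Q, ∑ y ∈ Q with r x y, g y = c x) :
    ∑ x ∈ Q, c x * M x = -∑ y ∈ Q, g y := by
  have hgM : ∀ y ∈ Q, g y * ∑ x ∈ Q with r x y, M x = -g y := fun y hy => by
    linear_combination g y * hM y hy
  rw [← sum_neg_distrib, ← sum_congr rfl hgM]
  simp_rw [mul_sum, sum_filter]
  rw [sum_comm]
  refine sum_congr rfl fun x hx => ?_
  rw [← hg x hx, sum_filter, sum_mul]
  simp_rw [ite_mul, zero_mul]

section UpperClassWeight

variable {α : Type} [PartialOrder α] [Fintype α] [OrderTop α]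

noncomputable def upperClassWeight (s : α → Prop) (p : α) : ℤ :=
  if s p then 1 - ∑ q ∈ (univ.filter fun q => p < q ∧ s q).attach, upperClassWeight s q
  else if p = ⊤ then 1 else 0
termination_by #(univ.filter fun q => p < q)
decreasing_by
  have hpq := (mem_filter.mp q.2).2.1
  refine card_lt_card ⟨fun r hr => ?_, fun h => ?_⟩
  · simp only [mem_filter, mem_univ, true_and] at hr ⊢
    exact hpq.trans hr
  · have hq : q.1 ∈ univ.filter fun r => p < r := by simpa using hpq
    simpa using h hq

theorem upperClassWeight_of_not {s : α → Prop} {p : α} (hp : ¬ s p) :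
    upperClassWeight s p = if p = ⊤ then 1 else 0 := by
  rw [upperClassWeight, if_neg hp]

theorem sum_upperClassWeight {s : α → Prop} (htop : ¬ s ⊤) (q : α) :
    ∑ p with q ≤ p ∧ (s p ↔ s q), upperClassWeight s p = 1 := by
  by_cases hq : s q
  · have hsplit : univ.filter (fun p => q ≤ p ∧ (s p ↔ s q))
        = insert q (univ.filter fun p => q < p ∧ s p) := by
      ext p
      simp only [mem_filter, mem_univ, true_and, mem_insert, le_iff_eq_or_lt, hq, iff_true]
      constructor
      · rintro ⟨rfl | h, hp⟩ <;> tauto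
      · rintro (rfl | h) <;> tauto
    rw [hsplit, sum_insert (by simp), upperClassWeight, if_pos hq,
      sum_attach _ (upperClassWeight s)]
    ring
  · rw [sum_eq_single_of_mem ⊤ (by simp [htop, hq])]
    · simp [upperClassWeight_of_not htop]
    · intro p hp hpt
      simp only [mem_filter, mem_univ, true_and, hq, iff_false] at hp
      simp [upperClassWeight_of_not hp.2, hpt]

end UpperClassWeight

theorem finsum_mem_Icc_bot {β M : Type} [PartialOrder β] [OrderBot β] [Fintype β]
    [AddCommMonoid M] (f : β → M) (y : β) :
    ∑ᶠ z ∈ Set.Icc ⊥ y, f z = ∑ z with z ≤ y, f z := by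
  rw [finsum_mem_eq_toFinset_sum]
  congr 1
  ext z
  simp

theorem sum_withBot_withTop {E M : Type} [Fintype E] [AddCommMonoid M]
    (f : WithBot (WithTop E) → M) :
    ∑ z, f z = f ⊥ + (f ⊤ + ∑ e : E, f ↑(↑e : WithTop E)) :=
  (Fintype.sum_option _).trans (congrArg _ (Fintype.sum_option _))

section Mobius

variable {E : Type} [PartialOrder E] [Fintype E]
  {mu : WithBot (WithTop E) → WithBot (WithTop E) → ℤ}

theorem mobius_bot_coe (hmu_refl : ∀ x, mu x x = 1)
    (hmu_rec : ∀ x y, x < y → ∑ᶠ z ∈ Set.Icc x y, mu x z = 0) (e : E) :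
    1 + ∑ e' with e' ≤ e, mu ⊥ ↑(↑e' : WithTop E) = 0 := by
  have := hmu_rec ⊥ ↑(↑e : WithTop E) (WithBot.bot_lt_coe _)
  rw [finsum_mem_Icc_bot, sum_filter, sum_withBot_withTop] at this
  simpa [hmu_refl, sum_filter] using this

theorem mobius_bot_top (hmu_refl : ∀ x, mu x x = 1)
    (hmu_rec : ∀ x y, x < y → ∑ᶠ z ∈ Set.Icc x y, mu x z = 0) :
    1 + ∑ e : E, mu ⊥ ↑(↑e : WithTop E) + mu ⊥ ⊤ = 0 := by
  have := hmu_rec ⊥ ⊤ bot_lt_top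
  rw [finsum_mem_Icc_bot, sum_filter, sum_withBot_withTop] at this
  simp only [hmu_refl, le_top, if_true] at this
  linear_combination this

end Mobius

section Rees

variable {α : Type} [PartialOrder α] {rk : α → ℕ} {t n : ℕ}

variable (rk) in
/-- The order of `Rees(P, T_{1,n+1})`, its element `(p, 0^j)` encoded as `(p, j)`. -/
def ReesLE (x y : α × ℕ) : Prop := x.1 ≤ y.1 ∧ x.2 ≤ y.2 ∧ rk x.1 + y.2 ≤ rk y.1 + x.2

theorem sum_range_filter_reesLE (hrk : Monotone rk) {q p : α} (hqp : q ≤ p) {j : ℕ}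
    (hj : j + 1 ≤ rk q) :
    ∑ k ∈ range (rk p) with ReesLE rk (q, j) (p, k), (-1 : ℤ) ^ k
      = if Even (rk p) ↔ Even (rk q) then (-1) ^ j else 0 := by
  have hrk := hrk hqp
  have hIcc : (range (rk p)).filter (fun k => ReesLE rk (q, j) (p, k))
      = Icc j (j + (rk p - rk q)) := by
    ext k
    simp only [ReesLE, mem_filter, mem_range, mem_Icc, hqp, true_and]
    omega
  simp only [hIcc, sum_Icc_neg_one_pow, Nat.even_sub hrk]

variable [OrderBot α]

instance [Finite α] : Finite (ReesElt α rk t n) :=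
  have : Finite {w : List (Fin t) // w.length ≤ n} := (List.finite_length_le (Fin t) n).to_subtype
  Finite.of_injective (fun e : ReesElt α rk t n =>
      ((e.1.1, ⟨e.1.2, e.2.2.1⟩) : α × {w : List (Fin t) // w.length ≤ n}))
    fun e e' h => by
      simp only [Prod.mk.injEq, Subtype.mk.injEq] at h
      exact Subtype.ext (Prod.ext h.1 h.2)

noncomputable instance [Finite α] : Fintype (ReesElt α rk t n) := Fintype.ofFinite _

def ReesElt.proj (e : ReesElt α rk t n) : α × ℕ := (e.1.1, e.1.2.length)

theorem ReesElt.rank_add_length_lt (hrk : StrictMono rk) {e e' : ReesElt α rk t n} (h : e' < e) :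
    rk e'.1.1 + e'.1.2.length < rk e.1.1 + e.1.2.length := by
  obtain ⟨hp, hw, hrkw⟩ := h.le
  rcases hp.eq_or_lt with hp | hp
  · have hw' : e'.1.2 = e.1.2 := hw.eq_of_length_le (by rw [hp] at hrkw; omega)
    exact absurd (Subtype.ext (Prod.ext hp hw')) h.ne
  · have := hrk hp
    have := hw.length_le
    omega

variable [Fintype α]

variable (rk n) in
/-- The proper part of `Rees(P, T_{1,n+1})` in the encoding of `ReesLE`. -/
noncomputable def reesLevels : Finset (α × ℕ) :=
  (univ ×ˢ range (n + 1)).filter fun x => x.1 ≠ ⊥ ∧ x.2 + 1 ≤ rk x.1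

theorem mem_reesLevels {x : α × ℕ} :
    x ∈ reesLevels rk n ↔ x.1 ≠ ⊥ ∧ x.2 ≤ n ∧ x.2 + 1 ≤ rk x.1 := by
  simp only [reesLevels, mem_filter, mem_product, mem_univ, mem_range, true_and, Nat.lt_succ_iff]
  tauto

theorem ReesElt.proj_mem (e : ReesElt α rk t n) : e.proj ∈ reesLevels rk n :=
  mem_reesLevels.mpr e.2

def ReesElt.ofLevel (a : Fin t) (x : α × ℕ) (hx : x ∈ reesLevels rk n) : ReesElt α rk t n :=
  ⟨(x.1, List.replicate x.2 a), by simpa using mem_reesLevels.mp hx⟩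

theorem ReesElt.proj_ofLevel (a : Fin t) (x : α × ℕ) (hx : x ∈ reesLevels rk n) :
    (ReesElt.ofLevel a x hx).proj = x := by
  simp [ReesElt.ofLevel, ReesElt.proj]

theorem ReesElt.sum_le_comp_proj {M : Type} [AddCommMonoid M] (G : α × ℕ → M)
    (e : ReesElt α rk t n) :
    ∑ e' with e' ≤ e, G e'.proj = ∑ x ∈ reesLevels rk n with ReesLE rk x e.proj, G x := by
  have hle : ∀ x ∈ (reesLevels rk n).filter (ReesLE rk · e.proj), x.2 ≤ e.1.2.length := by
    intro x hx
    exact (mem_filter.mp hx).2.2.1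
  refine sum_bij' (fun e' _ => e'.proj)
    (fun x hx => ⟨(x.1, e.1.2.take x.2), by
      simpa [hle x hx] using mem_reesLevels.mp (mem_filter.mp hx).1⟩) ?_ ?_ ?_ ?_ fun _ _ => rfl
  · intro e' he'
    obtain ⟨hp, hw, hrkw⟩ := (mem_filter.mp he').2
    exact mem_filter.mpr ⟨e'.proj_mem, hp, hw.length_le, hrkw⟩
  · intro x hx
    obtain ⟨hp, -, hrkw⟩ := (mem_filter.mp hx).2
    refine mem_filter.mpr ⟨mem_univ _, hp, List.take_prefix _ _, ?_⟩
    simpa [hle x hx, ReesElt.proj] using hrkw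
  · intro e' he'
    have hw := (mem_filter.mp he').2.2.1
    exact Subtype.ext (Prod.ext rfl (List.prefix_iff_eq_take.mp hw).symm)
  · intro x hx
    simp [ReesElt.proj, hle x hx]

theorem ReesElt.card_proj_eq {x : α × ℕ} (hx : x ∈ reesLevels rk n) :
    #{e : ReesElt α rk t n | e.proj = x} = t ^ x.2 := by
  have hlen : ∀ e ∈ ({e | e.proj = x} : Finset (ReesElt α rk t n)), e.1.2.length = x.2 :=
    fun e he => congrArg Prod.snd (mem_filter.mp he).2
  trans #(univ : Finset (List.Vector (Fin t) x.2))
  swap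
  · simp [card_vector]
  refine card_bij' (fun e he => ⟨e.1.2, hlen e he⟩)
    (fun v _ => ⟨(x.1, v.1), by simpa [v.2] using mem_reesLevels.mp hx⟩)
    (fun _ _ => mem_univ _) (fun v _ => ?_) (fun e he => ?_) (fun _ _ => rfl)
  · exact mem_filter.mpr ⟨mem_univ _, Prod.ext rfl v.2⟩
  · exact Subtype.ext (Prod.ext (congrArg Prod.fst (mem_filter.mp he).2).symm rfl)

theorem ReesElt.sum_comp_proj (G : α × ℕ → ℤ) :
    ∑ e : ReesElt α rk t n, G e.proj = ∑ x ∈ reesLevels rk n, t ^ x.2 * G x := by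
  rw [← sum_fiberwise_of_maps_to (fun e _ => ReesElt.proj_mem e)]
  refine sum_congr rfl fun x hx => ?_
  rw [sum_congr rfl fun e he => congrArg G (mem_filter.mp he).2, sum_const, card_proj_eq hx,
    nsmul_eq_mul]
  push_cast
  ring

theorem ReesElt.exists_eq_comp_proj (a : Fin t) (hrk : StrictMono rk)
    {m : ReesElt α rk t n → ℤ} (hm : ∀ e, 1 + ∑ e' with e' ≤ e, m e' = 0) :
    ∃ M : α × ℕ → ℤ, ∀ e, m e = M e.proj := by
  let M x := if hx : x ∈ reesLevels rk n then m (ofLevel a x hx) else 0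
  have hrec : ∀ e, (∀ e' < e, m e' = M e'.proj) →
      m e - M e.proj = -1 - ∑ x ∈ reesLevels rk n with ReesLE rk x e.proj, M x := by
    intro e ih
    have hdiff : ∑ e' with e' ≤ e, (m e' - M e'.proj) = m e - M e.proj :=
      sum_eq_single_of_mem e (by simp) fun e' he' hne =>
        sub_eq_zero.mpr (ih e' (lt_of_le_of_ne (mem_filter.mp he').2 hne))
    rw [sum_sub_distrib, sum_le_comp_proj] at hdiff
    linarith [hm e]
  refine ⟨M, fun e => ?_⟩
  -- `e` and the constant word `r` over `e.proj` satisfy the same recursion, and `m r = M e.proj`.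
  induction e using (measure fun e : ReesElt α rk t n => rk e.proj.1 + e.proj.2).wf.induction with
  | _ e ih =>
    let r := ofLevel a e.proj e.proj_mem
    have hr : r.proj = e.proj := proj_ofLevel ..
    have hmr : m r = M e.proj := by simp only [M, dif_pos e.proj_mem]; rfl
    have he := hrec e fun e' he' => ih e' (rank_add_length_lt hrk he')
    have hr' := hrec r fun e' he' => ih e' <| by
      have h := rank_add_length_lt hrk he'
      change _ < rk r.proj.1 + r.proj.2 at h
      rwa [hr] at h
    rw [hr] at hr'
    linarith

theorem ReesElt.one_add_sum_reesLE (a : Fin t) {m : ReesElt α rk t n → ℤ}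
    (hm : ∀ e, 1 + ∑ e' with e' ≤ e, m e' = 0) {M : α × ℕ → ℤ} (hM : ∀ e, m e = M e.proj)
    {y : α × ℕ} (hy : y ∈ reesLevels rk n) :
    1 + ∑ x ∈ reesLevels rk n with ReesLE rk x y, M x = 0 := by
  have := hm (ofLevel a y hy)
  simp_rw [hM, sum_le_comp_proj, proj_ofLevel] at this
  exact this

theorem sum_reesLevels (hbot : rk ⊥ = 0) (hrk_le : ∀ p, rk p ≤ n + 1) (f : α × ℕ → ℤ) :
    ∑ x ∈ reesLevels rk n, f x = ∑ p, ∑ k ∈ range (rk p), f (p, k) := by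
  rw [reesLevels, sum_filter, sum_product]
  refine sum_congr rfl fun p _ => ?_
  rw [← sum_filter]
  congr 1
  ext k
  have := hrk_le p
  by_cases hp : p = ⊥
  · simp [hp, hbot]
  · simp only [mem_filter, mem_range, ne_eq, hp, not_false_eq_true, true_and]
    omega

theorem sum_reesLevels_neg_one_pow_mul [OrderTop α] (hrk : Monotone rk) (hbot : rk ⊥ = 0)
    (hrk_le : ∀ p, rk p ≤ n + 1) (htop : ¬ Even (rk ⊤)) {M : α × ℕ → ℤ}
    (hM : ∀ y ∈ reesLevels rk n, 1 + ∑ x ∈ reesLevels rk n with ReesLE rk x y, M x = 0) :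
    ∑ x ∈ reesLevels rk n, (-1) ^ x.2 * M x = -1 := by
  have hodd : ∀ p, ¬ Even (rk p) →
      upperClassWeight (fun p => Even (rk p)) p = if p = ⊤ then 1 else 0 :=
    fun _ hp => upperClassWeight_of_not (s := fun p => Even (rk p)) hp
  have hsum := sum_upperClassWeight (s := fun p => Even (rk p)) htop
  generalize upperClassWeight (fun p => Even (rk p)) = b at hodd hsum
  have hb : ∑ y ∈ reesLevels rk n, b y.1 * (-1) ^ y.2 = 1 := by
    simp_rw [sum_reesLevels hbot hrk_le, ← mul_sum, neg_one_geom_sum]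
    rw [sum_eq_single_of_mem ⊤ (mem_univ _)]
    · simp [hodd ⊤ htop, htop]
    · intro p _ hp
      by_cases hp_even : Even (rk p)
      · simp [hp_even]
      · simp [hodd p hp_even, hp_even, hp]
  have hg : ∀ x ∈ reesLevels rk n,
      ∑ y ∈ reesLevels rk n with ReesLE rk x y, b y.1 * (-1) ^ y.2 = (-1) ^ x.2 := by
    rintro ⟨q, j⟩ hx
    have hj := (mem_reesLevels.mp hx).2.2
    calc _ = ∑ p, if q ≤ p ∧ (Even (rk p) ↔ Even (rk q)) then b p * (-1) ^ j else 0 := by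
          rw [sum_filter, sum_reesLevels hbot hrk_le]
          dsimp only
          refine sum_congr rfl fun p _ => ?_
          by_cases hqp : q ≤ p
          · rw [← sum_filter, ← mul_sum, sum_range_filter_reesLE hrk hqp hj]
            split_ifs <;> simp_all
          · simp [ReesLE, hqp]
      _ = (-1) ^ j := by
          rw [← sum_filter, ← sum_mul]
          convert one_mul _
          convert hsum q
  rw [sum_mul_eq_neg_sum_of_upper_sums _ _ hM hg, hb]

end Rees

theorem statement7 (n t : ℕ) (ht : 1 ≤ t) (hn : Even n)
    (α : Type) [Fintype α] [PartialOrder α] [BoundedOrder α]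
    (rk : α → ℕ) (hbot : rk ⊥ = 0) (htop : rk ⊤ = n + 1)
    (hcov : ∀ x y : α, x ⋖ y → rk y = rk x + 1)
    (mu : ReesTree α rk t n → ReesTree α rk t n → ℤ)
    (hmu_refl : ∀ x, mu x x = 1)
    (hmu_rec : ∀ x y : ReesTree α rk t n, x < y → ∑ᶠ z ∈ Set.Icc x y, mu x z = 0) :
    (1 + (t : ℤ)) ∣ mu ⊥ ⊤ := by
  have hrk : StrictMono rk := strictMono_of_covBy_add_one hcov
  have hrk_le : ∀ p, rk p ≤ n + 1 := fun p => htop ▸ hrk.monotone le_top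
  have htop_odd : ¬ Even (rk ⊤) := htop ▸ Nat.not_even_iff_odd.mpr hn.add_one
  have hmu_coe := mobius_bot_coe hmu_refl hmu_rec
  obtain ⟨M, hM⟩ := ReesElt.exists_eq_comp_proj ⟨0, ht⟩ hrk hmu_coe
  have hmu_top : mu ⊥ ⊤ = -1 - ∑ x ∈ reesLevels rk n, (t : ℤ) ^ x.2 * M x := by
    have := mobius_bot_top hmu_refl hmu_rec
    simp_rw [hM, ReesElt.sum_comp_proj] at this
    linarith
  have halt : ∑ x ∈ reesLevels rk n, (-1) ^ x.2 * M x = -1 :=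
    sum_reesLevels_neg_one_pow_mul hrk.monotone hbot hrk_le htop_odd
      fun y hy => ReesElt.one_add_sum_reesLE ⟨0, ht⟩ hmu_coe hM hy
  have hmu_top' : mu ⊥ ⊤ = -∑ x ∈ reesLevels rk n, ((t : ℤ) ^ x.2 - (-1) ^ x.2) * M x := by
    simp_rw [sub_mul, sum_sub_distrib]
    linarith
  rw [hmu_top', dvd_neg]
  refine dvd_sum fun x _ => Dvd.dvd.mul_right ?_ _
  simpa [add_comm] using sub_dvd_pow_sub_pow (t : ℤ) (-1) x.2
end

section
/- Let n ≥ 0 be even and let P be a graded poset of (odd) rank n+1. Then μ(Rees(P, C_{n+1})) is an even integer, where C_{n+1} is the chain with n+1 elements of ranks 0,…,n. -/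
/-- The proper part of the Rees product of a graded poset `(α, rk)` of rank `n+1`
with the `(n+1)`-element chain `C_{n+1}`: pairs `(p, q)` with `p ≠ ⊥`, `0 ≤ q ≤ n`,
and `q ≤ rk p - 1`. -/
def ReesCElt (α : Type) [PartialOrder α] [OrderBot α] (rk : α → ℕ) (n : ℕ) : Type :=
  {pq : α × ℕ // pq.1 ≠ ⊥ ∧ pq.2 ≤ n ∧ pq.2 + 1 ≤ rk pq.1}

/-- The Rees order: `(p,q) ≤ (p',q')` iff `p ≤ p'`, `q ≤ q'`, and
`rk p' - rk p ≥ q' - q`. -/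
instance (α : Type) [PartialOrder α] [OrderBot α] (rk : α → ℕ) (n : ℕ) :
    PartialOrder (ReesCElt α rk n) where
  le a b := a.1.1 ≤ b.1.1 ∧ a.1.2 ≤ b.1.2 ∧ rk a.1.1 + b.1.2 ≤ rk b.1.1 + a.1.2
  le_refl a := ⟨le_refl _, le_refl _, le_refl _⟩
  le_trans a b c hab hbc :=
    ⟨hab.1.trans hbc.1, hab.2.1.trans hbc.2.1, by
      have h1 := hab.2.2; have h2 := hbc.2.2; omega⟩
  le_antisymm a b hab hba := by
    apply Subtype.ext
    exact Prod.ext (le_antisymm hab.1 hba.1) (le_antisymm hab.2.1 hba.2.1)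

/-- The Rees product `Rees(P, C_{n+1})`: the proper part together with an adjoined
minimum `⊥` and maximum `⊤`. -/
abbrev ReesChain (α : Type) [PartialOrder α] [OrderBot α] (rk : α → ℕ) (n : ℕ) : Type :=
  WithBot (WithTop (ReesCElt α rk n))

/-!
The map `(p, q) ↦ (p, ρ(p) - 1 - q)` is an involutive automorphism `Φ` of the Rees product.
Any automorphism fixes `μ(0̂, ·)`, so modulo 2 the non-fixed elements of an interval `[0̂, z]`
cancel in pairs: on the fixed-point subposet, `μ(0̂, ·) mod 2` satisfies the Möbius recursion.
The fixed points are the pairs with `ρ(p) = 2q + 1`; since `n` is even, `(1̂_P, n/2)` is one of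
them and lies above all others, so the fixed-point poset has a unique coatom and its Möbius
number vanishes.
-/

open Finset

section FixedPoints

variable {P : Type*} [PartialOrder P] [OrderBot P] [Finite P] [LocallyFiniteOrder P]

theorem apply_orderIso_eq_of_sum_Icc_bot_eq_zero {G : Type*} [AddCommGroup G] {f : P → G}
    (hf : ∀ z, ⊥ < z → ∑ w ∈ Icc ⊥ z, f w = 0) (Φ : P ≃o P) (z : P) : f (Φ z) = f z := by
  induction z using WellFoundedLT.induction with
  | _ z ih =>
  rcases (bot_le : ⊥ ≤ z).eq_or_lt with rfl | hz
  · rw [Φ.map_bot]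
  have hreindex : ∑ w ∈ Icc ⊥ z, f (Φ w) = ∑ w ∈ Icc ⊥ (Φ z), f w :=
    sum_equiv Φ.toEquiv (by simp [Φ.le_iff_le]) (fun _ _ => rfl)
  have hdiff : ∑ w ∈ Icc ⊥ z, (f (Φ w) - f w) = f (Φ z) - f z :=
    sum_eq_single_of_mem z (by simp) fun w hw hwz =>
      by rw [ih w ((mem_Icc.1 hw).2.lt_of_ne hwz), sub_self]
  rw [← sub_eq_zero, ← hdiff, sum_sub_distrib, hreindex, hf z hz,
    hf (Φ z) (Φ.map_bot ▸ Φ.strictMono hz), sub_zero]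

variable {R : Type*} [Ring R] [CharP R 2] {f : P → R}
  (hf : ∀ z, ⊥ < z → ∑ w ∈ Icc ⊥ z, f w = 0) {Φ : P ≃o P} (hΦ : Function.Involutive Φ)
include hf hΦ

theorem sum_Icc_bot_filter_fixed_eq_zero [DecidableEq P] {z : P} (hz : ⊥ < z) (hΦz : Φ z = z) :
    ∑ w ∈ Icc ⊥ z with Φ w = w, f w = 0 := by
  have hfree : ∑ w ∈ Icc ⊥ z with ¬Φ w = w, f w = 0 := by
    refine sum_involution (fun w _ => Φ w) (fun w _ => ?_) (fun w hw _ => (mem_filter.1 hw).2)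
      (fun w hw => ?_) (fun w _ => hΦ w)
    · rw [apply_orderIso_eq_of_sum_Icc_bot_eq_zero hf, CharTwo.add_self_eq_zero]
    · simp only [mem_filter, mem_Icc, bot_le, true_and, hΦ w] at hw ⊢
      exact ⟨hΦz ▸ Φ.monotone hw.1, Ne.symm hw.2⟩
  rw [← hf z hz, ← sum_filter_add_sum_filter_not (Icc ⊥ z) (fun w => Φ w = w), hfree, add_zero]

theorem apply_top_eq_zero_of_forall_fixed_le [OrderTop P] {t : P} (hbt : ⊥ < t) (htt : t < ⊤)
    (hΦt : Φ t = t) (hmax : ∀ w, Φ w = w → w ≠ ⊤ → w ≤ t) : f ⊤ = 0 := by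
  classical
  have hsplit : {w ∈ Icc (⊥ : P) ⊤ | Φ w = w} = insert ⊤ {w ∈ Icc ⊥ t | Φ w = w} := by
    ext w
    simp only [mem_filter, mem_Icc, bot_le, le_top, true_and, mem_insert]
    by_cases hw : w = ⊤
    · simp [hw, Φ.map_top]
    · exact ⟨fun h => Or.inr ⟨hmax w h hw, h⟩, fun h => h.resolve_left hw |>.2⟩
  have htop := sum_Icc_bot_filter_fixed_eq_zero hf hΦ (hbt.trans htt) Φ.map_top
  rwa [hsplit, sum_insert (by simp [htt.not_ge]), sum_Icc_bot_filter_fixed_eq_zero hf hΦ hbt hΦt,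
    add_zero] at htop

end FixedPoints

theorem even_apply_top_of_forall_fixed_le {P : Type*} [PartialOrder P] [BoundedOrder P]
    [Finite P] {f : P → ℤ} (hf : ∀ z, ⊥ < z → ∑ᶠ w ∈ Set.Icc ⊥ z, f w = 0) {Φ : P ≃o P}
    (hΦ : Function.Involutive Φ) {t : P} (hbt : ⊥ < t) (htt : t < ⊤) (hΦt : Φ t = t)
    (hmax : ∀ w, Φ w = w → w ≠ ⊤ → w ≤ t) : Even (f ⊤) := by
  classical
  have := Fintype.ofFinite P
  let := Fintype.toLocallyFiniteOrder (α := P)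
  rw [← ZMod.intCast_eq_zero_iff_even]
  refine apply_top_eq_zero_of_forall_fixed_le (f := fun w => (f w : ZMod 2)) (fun z hz => ?_)
    hΦ hbt htt hΦt hmax
  rw [← Int.cast_sum, ← finsum_mem_coe_finset, coe_Icc, hf z hz, Int.cast_zero]

theorem even_apply_top_withBot_withTop {β : Type*} [PartialOrder β] [Finite β] {e : β ≃o β}
    (he : Function.Involutive e) {t : β} (het : e t = t) (hmax : ∀ x, e x = x → x ≤ t)
    {f : WithBot (WithTop β) → ℤ} (hf : ∀ z, ⊥ < z → ∑ᶠ w ∈ Set.Icc ⊥ z, f w = 0) :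
    Even (f ⊤) := by
  refine even_apply_top_of_forall_fixed_le hf (Φ := e.withTopCongr.withBotCongr) ?_
    (t := ((t : WithTop β) : WithBot (WithTop β))) (WithBot.bot_lt_coe _)
    (WithBot.coe_lt_coe.2 (WithTop.coe_lt_top t)) (by simp [het]) ?_
  · intro z
    induction z using WithBot.recBotCoe with
    | bot => rfl
    | coe z => induction z using WithTop.recTopCoe <;> simp [he _]
  · intro z hz hne
    induction z using WithBot.recBotCoe with
    | bot => exact bot_le
    | coe z =>
      induction z using WithTop.recTopCoe with
      | top => exact absurd rfl hne
      | coe x => simpa using hmax x (by simpa using hz)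

namespace ReesCElt

variable {α : Type} [PartialOrder α] [OrderBot α] {rk : α → ℕ} {n : ℕ}

instance [Finite α] : Finite (ReesCElt α rk n) :=
  Finite.of_injective (β := α × Fin (n + 1))
    (fun a => (a.1.1, ⟨a.1.2, Nat.lt_succ_of_le a.2.2.1⟩))
    fun _ _ h => Subtype.ext (Prod.ext (congrArg (·.1) h) (congrArg (·.2.val) h))

theorem le_iff {a b : ReesCElt α rk n} :
    a ≤ b ↔ a.1.1 ≤ b.1.1 ∧ a.1.2 ≤ b.1.2 ∧ rk a.1.1 + b.1.2 ≤ rk b.1.1 + a.1.2 :=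
  Iff.rfl

theorem le_of_rk_eq_two_mul_add_one {a b : ReesCElt α rk n} (ha : rk a.1.1 = 2 * a.1.2 + 1)
    (hb : rk b.1.1 = 2 * b.1.2 + 1) (hab : a.1.1 ≤ b.1.1) (hrk : rk a.1.1 ≤ rk b.1.1) : a ≤ b :=
  ⟨hab, by omega, by omega⟩

def flip (hle : ∀ p : α, rk p ≤ n + 1) (a : ReesCElt α rk n) : ReesCElt α rk n :=
  ⟨(a.1.1, rk a.1.1 - 1 - a.1.2), a.2.1,
    show rk a.1.1 - 1 - a.1.2 ≤ n by have := hle a.1.1; omega,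
    show rk a.1.1 - 1 - a.1.2 + 1 ≤ rk a.1.1 by have := a.2.2.2; omega⟩

variable (hle : ∀ p : α, rk p ≤ n + 1)
include hle

@[simp]
theorem coe_flip (a : ReesCElt α rk n) : (flip hle a).1 = (a.1.1, rk a.1.1 - 1 - a.1.2) :=
  rfl

theorem flip_involutive : Function.Involutive (flip hle) := fun a => by
  have := a.2.2.2
  exact Subtype.ext (Prod.ext rfl (by simp only [coe_flip]; omega))

def flipIso : ReesCElt α rk n ≃o ReesCElt α rk n where
  toEquiv := (flip_involutive hle).toPerm
  map_rel_iff' {a b} := by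
    have := a.2.2.2
    have := b.2.2.2
    show flip hle a ≤ flip hle b ↔ a ≤ b
    simp only [le_iff, coe_flip]
    constructor <;> rintro ⟨hp, hq, hrk⟩ <;> exact ⟨hp, by omega, by omega⟩

theorem flip_eq_self_iff {a : ReesCElt α rk n} : flip hle a = a ↔ rk a.1.1 = 2 * a.1.2 + 1 := by
  have := a.2.2.2
  refine ⟨fun h => ?_, fun h => Subtype.ext (Prod.ext rfl (by simp only [coe_flip]; omega))⟩
  have := congrArg (·.1.2) h
  simp only [coe_flip] at this
  omega

end ReesCElt

theorem statement8_general (n : ℕ) (hn : Even n)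
    (α : Type) [Fintype α] [PartialOrder α] [BoundedOrder α]
    (rk : α → ℕ) (hbot : rk ⊥ = 0) (htop : rk ⊤ = n + 1)
    (hcov : ∀ x y : α, x ⋖ y → rk y = rk x + 1)
    (mu : ReesChain α rk n → ReesChain α rk n → ℤ)
    (hmu_rec : ∀ x y : ReesChain α rk n, x < y → ∑ᶠ z ∈ Set.Icc x y, mu x z = 0) :
    Even (mu ⊥ ⊤) := by
  classical
  obtain ⟨k, rfl⟩ := hn
  let := Fintype.toLocallyFiniteOrder (α := α)
  have hmono : Monotone rk :=
    (monotone_iff_forall_covBy rk).2 fun x y hxy => (hcov x y hxy).symm ▸ Nat.le_succ _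
  have hle (p : α) : rk p ≤ k + k + 1 := htop ▸ hmono le_top
  have htop_ne_bot : (⊤ : α) ≠ ⊥ := fun h => by simp [h, hbot] at htop
  let t : ReesCElt α rk (k + k) := ⟨(⊤, k), htop_ne_bot, by omega, show k + 1 ≤ rk ⊤ by omega⟩
  have ht : rk t.1.1 = 2 * t.1.2 + 1 := by simp only [t, htop]; omega
  exact even_apply_top_withBot_withTop (e := ReesCElt.flipIso hle)
    (ReesCElt.flip_involutive hle) ((ReesCElt.flip_eq_self_iff hle).2 ht)
    (fun a ha => ReesCElt.le_of_rk_eq_two_mul_add_one ((ReesCElt.flip_eq_self_iff hle).1 ha) ht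
      le_top (htop ▸ hle _))
    fun z hz => hmu_rec ⊥ z hz

theorem statement8 (n : ℕ) (hn : Even n)
    (α : Type) [Fintype α] [PartialOrder α] [BoundedOrder α]
    (rk : α → ℕ) (hbot : rk ⊥ = 0) (htop : rk ⊤ = n + 1)
    (hcov : ∀ x y : α, x ⋖ y → rk y = rk x + 1)
    (mu : ReesChain α rk n → ReesChain α rk n → ℤ)
    (hmu_refl : ∀ x, mu x x = 1)
    (hmu_rec : ∀ x y : ReesChain α rk n, x < y → ∑ᶠ z ∈ Set.Icc x y, mu x z = 0) :
    Even (mu ⊥ ⊤) :=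
  statement8_general n hn α rk hbot htop hcov mu hmu_rec
end

section
/- Let n ≥ 0 and let (x,p) be an element of the concrete model of Rees(𝒞_n, C_{n+1}) other than 0̂ and 1̂, and set k = n+1 − s(x) (its corank). Then for every i with 1 ≤ i ≤ k, the number of elements (y,q) of the poset with (x,p) ≤ (y,q) and s(y) = n+1−i equals C(k−1, i−1)·(k−i+1). -/
/-- The number of coordinates of `x ∈ {0,1,*}ⁿ` equal to `*` (encoded as `2`). -/
def starCount {n : ℕ} (x : Fin n → Fin 3) : ℕ :=
  (Finset.univ.filter fun a => x a = 2).card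

/-- The proper part of the concrete model of `Rees(𝒞_n, C_{n+1})`: pairs `(x, i)`
with `x ∈ {0,1,*}ⁿ` (with `*` encoded as `2`) and `1 ≤ i ≤ s(x) + 1`. -/
def CubeReesElt (n : ℕ) : Type :=
  {xi : (Fin n → Fin 3) × ℕ // 1 ≤ xi.2 ∧ xi.2 ≤ starCount xi.1 + 1}

/-- The order: `(x,i) ≤ (y,j)` iff every coordinate of `y` equals the corresponding
coordinate of `x` or is `*`, `i ≤ j`, and `j - i ≤ s(y) - s(x)`. -/
instance (n : ℕ) : PartialOrder (CubeReesElt n) where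
  le a b := (∀ c, b.1.1 c = a.1.1 c ∨ b.1.1 c = 2) ∧ a.1.2 ≤ b.1.2 ∧
    b.1.2 + starCount a.1.1 ≤ a.1.2 + starCount b.1.1
  le_refl a := ⟨fun c => Or.inl rfl, le_refl _, le_refl _⟩
  le_trans a b c hab hbc :=
    ⟨fun d => by
      rcases hbc.1 d with h | h
      · rw [h]; exact hab.1 d
      · exact Or.inr h,
     hab.2.1.trans hbc.2.1, by
      have h1 := hab.2.2; have h2 := hbc.2.2; omega⟩
  le_antisymm a b hab hba := by
    apply Subtype.ext
    apply Prod.ext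
    · funext c
      rcases hab.1 c with h | h
      · exact h.symm
      · rcases hba.1 c with h' | h'
        · exact h'
        · rw [h, h']
    · exact le_antisymm hab.2.1 hba.2.1

/-- The concrete model of `Rees(𝒞_n, C_{n+1})`: the proper part together with an
adjoined minimum `⊥` and maximum `⊤`. -/
abbrev CubeRees (n : ℕ) : Type := WithBot (WithTop (CubeReesElt n))


lemma starCount_decomp {n : ℕ} (x y : Fin n → Fin 3)
    (h : ∀ c, y c = x c ∨ y c = 2) :
    starCount y = starCount x +
      (Finset.univ.filter fun c => y c = 2 ∧ ¬ x c = 2).card := by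
  classical
  unfold starCount
  have hset : (Finset.univ.filter fun c => y c = 2) =
      (Finset.univ.filter fun c => x c = 2) ∪
      (Finset.univ.filter fun c => y c = 2 ∧ ¬ x c = 2) := by
    ext c
    simp only [Finset.mem_filter, Finset.mem_union, Finset.mem_univ, true_and]
    constructor
    · intro hy
      by_cases hx : x c = 2
      · exact Or.inl hx
      · exact Or.inr ⟨hy, hx⟩
    · rintro (hx | ⟨hy, _⟩)
      · rcases h c with h' | h'
        · rw [h', hx]
        · exact h'
      · exact hy
  rw [hset, Finset.card_union_of_disjoint]
  rw [Finset.disjoint_filter]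
  rintro c _ hx ⟨_, hx'⟩
  exact hx' hx

lemma starCount_ite {n : ℕ} (x : Fin n → Fin 3) (T : Finset (Fin n))
    (hT : ∀ c ∈ T, ¬ x c = 2) :
    starCount (fun c => if c ∈ T then 2 else x c) = starCount x + T.card := by
  classical
  have h : ∀ c, (fun c => if c ∈ T then (2 : Fin 3) else x c) c = x c ∨
      (fun c => if c ∈ T then (2 : Fin 3) else x c) c = 2 := by
    intro c; by_cases hc : c ∈ T <;> simp [hc]
  rw [starCount_decomp x _ h]
  congr 1
  have heq : (Finset.univ.filter fun c =>
      (fun c => if c ∈ T then (2 : Fin 3) else x c) c = 2 ∧ ¬ x c = 2) = T := by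
    ext c
    simp only [Finset.mem_filter, Finset.mem_univ, true_and]
    by_cases hc : c ∈ T
    · simpa [hc] using hT c hc
    · simp [hc]
  rw [heq]

theorem statement9 (n : ℕ) (a : CubeReesElt n) (k : ℕ)
    (hk : k = n + 1 - starCount a.1.1)
    (i : ℕ) (hi1 : 1 ≤ i) (hik : i ≤ k) :
    Nat.card {b : CubeReesElt n // a ≤ b ∧ starCount b.1.1 = n + 1 - i} =
      Nat.choose (k - 1) (i - 1) * (k - i + 1) := by
  classical
  have hp1 : 1 ≤ a.1.2 := a.2.1
  have hp2 : a.1.2 ≤ starCount a.1.1 + 1 := a.2.2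
  have hsn : starCount a.1.1 ≤ n := by
    simpa [starCount] using
      (Finset.card_filter_le Finset.univ fun c => a.1.1 c = 2)
  set S : Finset (Fin n) := Finset.univ.filter (fun c => ¬ a.1.1 c = 2) with hSdef
  have hScard : S.card = k - 1 := by
    have h2 := Finset.card_filter_add_card_filter_not
      (s := (Finset.univ : Finset (Fin n))) (p := fun c => a.1.1 c = 2)
    simp only [Finset.card_univ, Fintype.card_fin] at h2
    have hs' : (Finset.univ.filter fun c => a.1.1 c = 2).card = starCount a.1.1 := rfl
    rw [hSdef]
    omega
  have e : {b : CubeReesElt n // a ≤ b ∧ starCount b.1.1 = n + 1 - i} ≃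
      {T // T ∈ S.powersetCard (k - i)} × Fin (k - i + 1) := by
    refine
      { toFun := fun b =>
          (⟨Finset.univ.filter (fun c => b.1.1.1 c = 2 ∧ ¬ a.1.1 c = 2), ?_⟩,
           ⟨b.1.1.2 - a.1.2, ?_⟩)
        invFun := fun Tt =>
          ⟨⟨⟨fun c => if c ∈ Tt.1.1 then 2 else a.1.1 c, a.1.2 + Tt.2.1⟩, ?_⟩, ?_⟩
        left_inv := ?_
        right_inv := ?_ }
    · -- membership in powersetCard
      have hab := b.2.1
      have hcard := b.2.2
      rw [Finset.mem_powersetCard]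
      constructor
      · intro c hc
        rw [hSdef, Finset.mem_filter]
        rw [Finset.mem_filter] at hc
        exact ⟨hc.1, hc.2.2⟩
      · have hd := starCount_decomp a.1.1 b.1.1.1 hab.1
        omega
    · -- Fin bound
      have hab := b.2.1
      have hcard := b.2.2
      have h3 := hab.2.2
      omega
    · -- element condition
      have hT := Tt.1.2
      rw [Finset.mem_powersetCard] at hT
      have hTs : ∀ c ∈ Tt.1.1, ¬ a.1.1 c = 2 := fun c hc =>
        (Finset.mem_filter.mp (hT.1 hc)).2
      have hsc := starCount_ite a.1.1 Tt.1.1 hTs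
      have ht2 := Tt.2.2
      dsimp only
      omega
    · -- a ≤ b and starCount
      have hT := Tt.1.2
      rw [Finset.mem_powersetCard] at hT
      have hTs : ∀ c ∈ Tt.1.1, ¬ a.1.1 c = 2 := fun c hc =>
        (Finset.mem_filter.mp (hT.1 hc)).2
      have hsc := starCount_ite a.1.1 Tt.1.1 hTs
      have ht2 := Tt.2.2
      refine ⟨⟨fun c => ?_, ?_, ?_⟩, ?_⟩
      · dsimp only
        by_cases hc : c ∈ Tt.1.1
        · simp [hc]
        · simp [hc]
      · dsimp only
        omega
      · dsimp only
        rw [hsc]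
        omega
      · dsimp only
        rw [hsc]
        omega
    · -- left_inv
      intro b
      have hab := b.2.1
      have hq : a.1.2 ≤ b.1.1.2 := hab.2.1
      apply Subtype.ext
      apply Subtype.ext
      apply Prod.ext
      · funext c
        dsimp only
        by_cases hc : b.1.1.1 c = 2 ∧ ¬ a.1.1 c = 2
        · rw [if_pos (Finset.mem_filter.mpr ⟨Finset.mem_univ c, hc⟩)]
          exact hc.1.symm
        · have hmem : c ∉ Finset.univ.filter
              (fun c => b.1.1.1 c = 2 ∧ ¬ a.1.1 c = 2) := by
            simp only [Finset.mem_filter, Finset.mem_univ, true_and]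
            exact hc
          rw [if_neg hmem]
          rcases hab.1 c with h' | h'
          · exact h'.symm
          · push_neg at hc
            have hx2 := hc h'
            rw [h', hx2]
      · dsimp only
        omega
    · -- right_inv
      rintro ⟨⟨T, hT⟩, t⟩
      have hT' := hT
      rw [Finset.mem_powersetCard] at hT'
      have hTs : ∀ c ∈ T, ¬ a.1.1 c = 2 := fun c hc =>
        (Finset.mem_filter.mp (hT'.1 hc)).2
      apply Prod.ext
      · apply Subtype.ext
        dsimp only
        ext c
        simp only [Finset.mem_filter, Finset.mem_univ, true_and]
        by_cases hc : c ∈ T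
        · simpa [hc] using hTs c hc
        · simp [hc]
      · apply Fin.ext
        dsimp only
        omega
  rw [Nat.card_congr e, Nat.card_prod, Nat.card_eq_fintype_card,
    Nat.card_eq_fintype_card, Fintype.card_coe, Fintype.card_fin,
    Finset.card_powersetCard, hScard]
  have hch : (k - 1).choose (k - i) = (k - 1).choose (i - 1) := by
    have h1 : k - i = (k - 1) - (i - 1) := by omega
    rw [h1, Nat.choose_symm (by omega)]
  rw [hch]
end

section
/- Let n ≥ 0 and let (x,p) be an element of the concrete model of Rees(𝒞_n, C_{n+1}) other than 0̂ and 1̂, and set k = n+1 − s(x) (its corank, so k ≥ 1). Then the Möbius function of the interval [(x,p), 1̂] satisfies μ((x,p), 1̂) = (−1)^k · (k−1)!. -/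
/-!
The elements above `a = (x, i)` are the pairs `(S, l)` with `S` a set of non-star coordinates of
`x` (turned into stars) and `i ≤ l ≤ i + #S`, and `(T, l') ≤ (S, l)` iff `T ⊆ S`, `l' ≤ l` and
`l - l' ≤ #S - #T`. Let `F S` be the sum of `μ(a, (S, l))` over the levels `l`. Summing the
recursion `∑_{a ≤ c ≤ (S, l)} μ(a, c) = 0` over the `#S + 1` levels of a nonempty `S` counts every
`(T, l')` with `T ⊆ S` exactly `#S - #T + 1` times, so `∑_{T ⊆ S} (#S - #T + 1) F T = 0`. For
`G S = ∑_{T ⊆ S} F T` this says `G S = -∑_{e ∈ S} G (S \ {e})`, whence `G S = (-1)^#S #S!`.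
Finally `μ(a, 1̂) = -G(nonstars of x)`, and `x` has `k - 1` non-star coordinates.
-/

open Finset

namespace Finset
variable {α : Type*} [DecidableEq α]

theorem sum_powerset_card_sdiff_nsmul {M : Type*} [AddCommMonoid M] (S : Finset α)
    (f : Finset α → M) :
    ∑ T ∈ S.powerset, #(S \ T) • f T = ∑ e ∈ S, ∑ T ∈ (S.erase e).powerset, f T := by
  simp_rw [← sum_const]
  exact sum_comm' fun T e => by
    simp only [mem_powerset, mem_sdiff, subset_erase]
    tauto

theorem sum_powerset_eq_neg_one_pow_mul_factorial {R : Type*} [CommRing R] (D : Finset α)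
    (F : Finset α → R) (h_empty : F ∅ = 1)
    (h_rec : ∀ S ⊆ D, S.Nonempty → ∑ T ∈ S.powerset, ((#S - #T + 1 : ℕ) : R) * F T = 0) :
    ∑ T ∈ D.powerset, F T = (-1) ^ #D * ((#D).factorial : R) := by
  suffices ∀ k, ∀ S ⊆ D, #S = k → ∑ T ∈ S.powerset, F T = (-1) ^ k * (k.factorial : R) from
    this _ D subset_rfl rfl
  intro k
  induction k with
  | zero => intro S _ hS; simp [card_eq_zero.mp hS, h_empty]
  | succ k ih =>
    intro S hSD hS
    have h_erase : ∀ e ∈ S, ∑ T ∈ (S.erase e).powerset, F T = (-1) ^ k * (k.factorial : R) :=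
      fun e he => ih _ ((erase_subset e S).trans hSD) (by rw [card_erase_of_mem he, hS]; rfl)
    have h_split : ∑ T ∈ S.powerset, ((#S - #T + 1 : ℕ) : R) * F T
        = ∑ T ∈ S.powerset, F T + ∑ e ∈ S, ∑ T ∈ (S.erase e).powerset, F T := by
      rw [← sum_powerset_card_sdiff_nsmul, ← sum_add_distrib]
      refine sum_congr rfl fun T hT => ?_
      rw [card_sdiff_of_subset (mem_powerset.mp hT), nsmul_eq_mul]
      push_cast
      ring
    have := h_rec S hSD (card_pos.mp (by omega))
    rw [h_split, sum_congr rfl h_erase, sum_const, hS, nsmul_eq_mul] at this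
    rw [pow_succ, Nat.factorial_succ]
    push_cast at this ⊢
    linear_combination this

end Finset

namespace CubeReesElt
variable {n : ℕ}

theorem le_def {a b : CubeReesElt n} : a ≤ b ↔ (∀ c, b.1.1 c = a.1.1 c ∨ b.1.1 c = 2) ∧
    a.1.2 ≤ b.1.2 ∧ b.1.2 + starCount a.1.1 ≤ a.1.2 + starCount b.1.1 :=
  Iff.rfl

def nonStars (x : Fin n → Fin 3) : Finset (Fin n) := univ.filter (x · ≠ 2)

def fillStars (x : Fin n → Fin 3) (S : Finset (Fin n)) : Fin n → Fin 3 :=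
  fun c => if c ∈ S then 2 else x c

theorem card_nonStars (x : Fin n → Fin 3) : #(nonStars x) = n - starCount x := by
  rw [nonStars, starCount, filter_not, card_sdiff_of_subset (filter_subset _ _), card_univ,
    Fintype.card_fin]

theorem starCount_le (x : Fin n → Fin 3) : starCount x ≤ n :=
  (card_filter_le _ _).trans_eq (card_fin n)

theorem starCount_fillStars {x : Fin n → Fin 3} {S : Finset (Fin n)} (hS : S ⊆ nonStars x) :
    starCount (fillStars x S) = starCount x + #S := by
  have h : univ.filter (fillStars x S · = 2) = univ.filter (x · = 2) ∪ S := by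
    ext c
    by_cases hc : c ∈ S <;> simp [fillStars, hc]
  rw [starCount, h, card_union_of_disjoint]
  · rfl
  · exact disjoint_left.mpr fun c hc hcS => (mem_filter.mp (hS hcS)).2 (mem_filter.mp hc).2

theorem fillStars_refines_iff {x : Fin n → Fin 3} {S T : Finset (Fin n)} (hS : S ⊆ nonStars x) :
    (∀ c, fillStars x T c = fillStars x S c ∨ fillStars x T c = 2) ↔ S ⊆ T := by
  constructor
  · intro h c hcS
    by_contra hcT
    have hx : x c ≠ 2 := (mem_filter.mp (hS hcS)).2
    simpa [fillStars, hcS, hcT, hx] using h c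
  · intro hST c
    by_cases hcT : c ∈ T
    · simp [fillStars, hcT]
    · have hcS : c ∉ S := fun h => hcT (hST h)
      simp [fillStars, hcT, hcS]

theorem fillStars_filter_eq_two {x y : Fin n → Fin 3} (h : ∀ c, y c = x c ∨ y c = 2) :
    fillStars x ((nonStars x).filter (y · = 2)) = y := by
  funext c
  rcases h c with hc | hc <;> by_cases hx : x c = 2 <;> simp [fillStars, nonStars, hc, hx]

/-- `⟨S, l⟩` stands for the element above `a` obtained by turning the coordinates in `S` into
stars and moving to level `l`. -/
def upperParams (a : CubeReesElt n) : Finset ((_ : Finset (Fin n)) × ℕ) :=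
  (nonStars a.1.1).powerset.sigma fun S => Icc a.1.2 (a.1.2 + #S)

theorem mk_mem_upperParams {a : CubeReesElt n} {S : Finset (Fin n)} {l : ℕ} :
    ⟨S, l⟩ ∈ upperParams a ↔ S ⊆ nonStars a.1.1 ∧ a.1.2 ≤ l ∧ l ≤ a.1.2 + #S := by
  simp [upperParams]

theorem valid_of_mem_upperParams {a : CubeReesElt n} {p : (_ : Finset (Fin n)) × ℕ}
    (hp : p ∈ upperParams a) : 1 ≤ p.2 ∧ p.2 ≤ starCount (fillStars a.1.1 p.1) + 1 := by
  obtain ⟨S, l⟩ := p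
  obtain ⟨hS, h1, h2⟩ := mk_mem_upperParams.mp hp
  have := a.2
  dsimp only
  rw [starCount_fillStars hS]
  omega

def ofParams (a : CubeReesElt n) (p : (_ : Finset (Fin n)) × ℕ) (hp : p ∈ upperParams a) :
    CubeReesElt n :=
  ⟨(fillStars a.1.1 p.1, p.2), valid_of_mem_upperParams hp⟩

def upperPoint (a : CubeReesElt n) (p : (_ : Finset (Fin n)) × ℕ) : CubeRees n :=
  if hp : p ∈ upperParams a then ofParams a p hp else ⊥

variable {a : CubeReesElt n}

theorem upperPoint_of_mem {p : (_ : Finset (Fin n)) × ℕ} (hp : p ∈ upperParams a) :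
    upperPoint a p = ofParams a p hp :=
  dif_pos hp

theorem upperPoint_le_upperPoint_iff {S T : Finset (Fin n)} {l l' : ℕ} (hp : ⟨S, l⟩ ∈ upperParams a)
    (hq : ⟨T, l'⟩ ∈ upperParams a) :
    upperPoint a ⟨S, l⟩ ≤ upperPoint a ⟨T, l'⟩ ↔ S ⊆ T ∧ l ≤ l' ∧ l' + #S ≤ l + #T := by
  have hS := (mk_mem_upperParams.mp hp).1
  rw [upperPoint_of_mem hp, upperPoint_of_mem hq, WithBotTop.coe_le_coe, le_def]
  dsimp only [ofParams]
  rw [fillStars_refines_iff hS, starCount_fillStars hS,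
    starCount_fillStars (mk_mem_upperParams.mp hq).1]
  exact and_congr_right fun _ => and_congr_right fun _ => by omega

theorem empty_mem_upperParams : ⟨∅, a.1.2⟩ ∈ upperParams a :=
  mk_mem_upperParams.mpr ⟨empty_subset _, le_rfl, by simp⟩

theorem upperPoint_empty : upperPoint a ⟨∅, a.1.2⟩ = a := by
  rw [upperPoint_of_mem empty_mem_upperParams]
  refine congrArg WithBotTop.coe (Subtype.ext (Prod.ext (funext fun c => ?_) rfl))
  simp [ofParams, fillStars]

theorem le_upperPoint {p : (_ : Finset (Fin n)) × ℕ} (hp : p ∈ upperParams a) :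
    (a : CubeRees n) ≤ upperPoint a p := by
  obtain ⟨S, l⟩ := p
  have := mk_mem_upperParams.mp hp
  rw [← upperPoint_empty, upperPoint_le_upperPoint_iff empty_mem_upperParams hp, card_empty]
  exact ⟨empty_subset _, by omega⟩

theorem injOn_upperPoint : Set.InjOn (upperPoint a) (upperParams a) := by
  rintro ⟨S, l⟩ hp ⟨T, l'⟩ hq h
  have h₁ := (upperPoint_le_upperPoint_iff hp hq).mp h.le
  have h₂ := (upperPoint_le_upperPoint_iff hq hp).mp h.ge
  obtain rfl : S = T := h₁.1.antisymm h₂.1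
  obtain rfl : l = l' := h₁.2.1.antisymm h₂.2.1
  rfl

theorem exists_upperPoint_eq {c : CubeReesElt n} (h : a ≤ c) :
    ∃ p ∈ upperParams a, upperPoint a p = c := by
  set S := (nonStars a.1.1).filter (c.1.1 · = 2)
  have hfill : fillStars a.1.1 S = c.1.1 := fillStars_filter_eq_two h.1
  have hstar : starCount c.1.1 = starCount a.1.1 + #S := by
    rw [← hfill, starCount_fillStars (filter_subset _ _)]
  have hp : ⟨S, c.1.2⟩ ∈ upperParams a := by
    have := h.2
    exact mk_mem_upperParams.mpr ⟨filter_subset _ _, by omega⟩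
  refine ⟨_, hp, ?_⟩
  rw [upperPoint_of_mem hp]
  exact congrArg WithBotTop.coe (Subtype.ext (Prod.ext hfill rfl))

theorem upperPoint_ne_top (p : (_ : Finset (Fin n)) × ℕ) : upperPoint a p ≠ ⊤ := by
  unfold upperPoint
  split_ifs
  exacts [WithBotTop.coe_ne_top _, WithBotTop.top_ne_bot.symm]

theorem image_upperPoint : upperPoint a '' upperParams a = Set.Ici (a : CubeRees n) \ {⊤} := by
  ext z
  constructor
  · rintro ⟨p, hp, rfl⟩
    exact ⟨le_upperPoint hp, upperPoint_ne_top p⟩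
  · rintro ⟨haz, hz⟩
    induction z using WithBotTop.rec with
    | bot => exact absurd (le_bot_iff.mp haz) (WithBotTop.coe_ne_bot a)
    | coe c => exact exists_upperPoint_eq (WithBotTop.coe_le_coe.mp haz)
    | top => exact absurd rfl hz

open scoped Classical in
theorem finsum_Icc_eq_sum {M : Type*} [AddCommMonoid M] (f : CubeRees n → M) {b : CubeRees n}
    (hb : b ≠ ⊤) :
    ∑ᶠ z ∈ Set.Icc (a : CubeRees n) b, f z =
      ∑ p ∈ upperParams a with upperPoint a p ≤ b, f (upperPoint a p) := by
  have hIcc :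
      Set.Icc (a : CubeRees n) b = upperPoint a '' ↑{p ∈ upperParams a | upperPoint a p ≤ b} := by
    ext z
    simp only [coe_filter, Set.mem_image, Set.mem_ofPred_eq]
    constructor
    · rintro ⟨haz, hzb⟩
      have hz : z ∈ upperPoint a '' upperParams a :=
        image_upperPoint ▸ ⟨haz, fun hz => hb (top_le_iff.mp (hz ▸ hzb))⟩
      obtain ⟨p, hp, rfl⟩ := hz
      exact ⟨p, ⟨hp, hzb⟩, rfl⟩
    · rintro ⟨p, ⟨hp, hpb⟩, rfl⟩
      exact ⟨le_upperPoint hp, hpb⟩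
  rw [hIcc, finsum_mem_image (injOn_upperPoint.mono (filter_subset _ _)), finsum_mem_coe_finset]

theorem finsum_Icc_top_eq_sum {M : Type*} [AddCommMonoid M] (f : CubeRees n → M) :
    ∑ᶠ z ∈ Set.Icc (a : CubeRees n) ⊤, f z = f ⊤ + ∑ p ∈ upperParams a, f (upperPoint a p) := by
  have hIcc : Set.Icc (a : CubeRees n) ⊤ = insert ⊤ (upperPoint a '' upperParams a) := by
    rw [image_upperPoint, Set.insert_sdiff_singleton, Set.insert_eq_of_mem (Set.mem_Ici.mpr le_top),
      Set.Icc_top]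
  have htop : ⊤ ∉ upperPoint a '' upperParams a := by simp [image_upperPoint]
  rw [hIcc, finsum_mem_insert _ htop ((upperParams a).finite_toSet.image _),
    finsum_mem_image injOn_upperPoint, finsum_mem_coe_finset]

section Mobius
variable {R : Type*} [CommRing R] (mu : CubeRees n → CubeRees n → R) (a)

def levelSum (S : Finset (Fin n)) : R :=
  ∑ l ∈ Icc a.1.2 (a.1.2 + #S), mu a (upperPoint a ⟨S, l⟩)

theorem levelSum_empty (hmu_refl : ∀ x, mu x x = 1) : levelSum a mu ∅ = 1 := by
  rw [levelSum, card_empty, add_zero, Icc_self, sum_singleton, upperPoint_empty, hmu_refl]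

variable {a} in
open scoped Classical in
theorem card_filter_upperPoint_le {p : (_ : Finset (Fin n)) × ℕ} (hp : p ∈ upperParams a)
    {S : Finset (Fin n)} (hS : S ⊆ nonStars a.1.1) :
    #{l ∈ Icc a.1.2 (a.1.2 + #S) | upperPoint a p ≤ upperPoint a ⟨S, l⟩} =
      if p.1 ⊆ S then #S - #p.1 + 1 else 0 := by
  obtain ⟨T, l'⟩ := p
  obtain ⟨-, h₁, h₂⟩ := mk_mem_upperParams.mp hp
  dsimp only
  rw [filter_congr fun l hl =>
    upperPoint_le_upperPoint_iff hp (mk_mem_upperParams.mpr ⟨hS, mem_Icc.mp hl⟩)]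
  split_ifs with hTS
  · have := card_le_card hTS
    have hwindow : {l ∈ Icc a.1.2 (a.1.2 + #S) | T ⊆ S ∧ l' ≤ l ∧ l + #T ≤ l' + #S} =
        Icc l' (l' + (#S - #T)) := by
      ext l
      simp only [mem_filter, mem_Icc, hTS, true_and]
      omega
    rw [hwindow, Nat.card_Icc]
    omega
  · rw [filter_false_of_mem fun l _ h => hTS h.1, card_empty]

theorem sum_powerset_mul_levelSum_eq_zero
    (hmu_rec : ∀ x y : CubeRees n, x < y → ∑ᶠ z ∈ Set.Icc x y, mu x z = 0)
    {S : Finset (Fin n)} (hS : S ⊆ nonStars a.1.1) (hne : S.Nonempty) :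
    ∑ T ∈ S.powerset, ((#S - #T + 1 : ℕ) : R) * levelSum a mu T = 0 := by
  classical
  have hmem : ∀ l ∈ Icc a.1.2 (a.1.2 + #S), ⟨S, l⟩ ∈ upperParams a := fun l hl =>
    mk_mem_upperParams.mpr ⟨hS, mem_Icc.mp hl⟩
  have hinterval : ∀ l ∈ Icc a.1.2 (a.1.2 + #S), ∑ p ∈ upperParams a,
      (if upperPoint a p ≤ upperPoint a ⟨S, l⟩ then mu a (upperPoint a p) else 0) = 0 := by
    intro l hl
    have hlt : (a : CubeRees n) < upperPoint a ⟨S, l⟩ := by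
      refine (le_upperPoint (hmem l hl)).lt_of_ne fun h => hne.ne_empty ?_
      rw [← upperPoint_empty] at h
      exact congrArg Sigma.fst (injOn_upperPoint empty_mem_upperParams (hmem l hl) h).symm
    rw [← sum_filter, ← finsum_Icc_eq_sum _ (upperPoint_ne_top _)]
    exact hmu_rec _ _ hlt
  calc ∑ T ∈ S.powerset, ((#S - #T + 1 : ℕ) : R) * levelSum a mu T
      = ∑ T ∈ S.powerset, ((if T ⊆ S then #S - #T + 1 else 0 : ℕ) : R) * levelSum a mu T :=
        sum_congr rfl fun T hT => by rw [if_pos (mem_powerset.mp hT)]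
    _ = ∑ T ∈ (nonStars a.1.1).powerset,
          ((if T ⊆ S then #S - #T + 1 else 0 : ℕ) : R) * levelSum a mu T :=
        sum_subset (powerset_mono.mpr hS) fun T _ hT => by
          rw [if_neg (mt mem_powerset.mpr hT), Nat.cast_zero, zero_mul]
    _ = ∑ p ∈ upperParams a,
          ((if p.1 ⊆ S then #S - #p.1 + 1 else 0 : ℕ) : R) * mu a (upperPoint a p) := by
        rw [upperParams, sum_sigma]
        simp_rw [levelSum, mul_sum]
    _ = ∑ p ∈ upperParams a, ∑ l ∈ Icc a.1.2 (a.1.2 + #S),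
          if upperPoint a p ≤ upperPoint a ⟨S, l⟩ then mu a (upperPoint a p) else 0 := by
        refine sum_congr rfl fun p hp => ?_
        rw [← card_filter_upperPoint_le hp hS, ← sum_filter, sum_const, nsmul_eq_mul]
    _ = 0 := by
        rw [sum_comm]
        exact sum_eq_zero hinterval

theorem mu_top_eq_neg_sum_levelSum
    (hmu_rec : ∀ x y : CubeRees n, x < y → ∑ᶠ z ∈ Set.Icc x y, mu x z = 0) :
    mu a ⊤ = -∑ S ∈ (nonStars a.1.1).powerset, levelSum a mu S := by
  have h := hmu_rec _ _ (lt_top_iff_ne_top.mpr (WithBotTop.coe_ne_top a))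
  rw [finsum_Icc_top_eq_sum, upperParams, sum_sigma] at h
  exact eq_neg_of_add_eq_zero_left h

end Mobius

end CubeReesElt

open CubeReesElt

theorem statement10 (n : ℕ) (a : CubeReesElt n) (k : ℕ)
    (hk : k = n + 1 - starCount a.1.1)
    (mu : CubeRees n → CubeRees n → ℤ)
    (hmu_refl : ∀ x, mu x x = 1)
    (hmu_rec : ∀ x y : CubeRees n, x < y → ∑ᶠ z ∈ Set.Icc x y, mu x z = 0) :
    mu ((a : WithTop (CubeReesElt n)) : CubeRees n) ⊤ =
      (-1) ^ k * ((k - 1).factorial : ℤ) := by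
  have hK : #(nonStars a.1.1) + 1 = k := by
    have := starCount_le a.1.1
    rw [card_nonStars, hk]
    omega
  have hsum := sum_powerset_eq_neg_one_pow_mul_factorial (nonStars a.1.1) (levelSum a mu)
    (levelSum_empty a mu hmu_refl) fun S hS hne =>
      sum_powerset_mul_levelSum_eq_zero a mu hmu_rec hS hne
  rw [← hK, Nat.add_sub_cancel, pow_succ]
  change mu (a : CubeRees n) ⊤ = _
  rw [mu_top_eq_neg_sum_levelSum a mu hmu_rec, hsum]
  ring
end

section
/- For every n ≥ 1, the Möbius function of the Rees product of the cubical lattice with the chain satisfies μ(Rees(𝒞_n, C_{n+1})) = −1 + Σ_{i=0}^{n} (−1)^{n−i} · 2^{n−i} · C(n,i) · (i+1) · (n−i)!. -/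
/-!
For `w = (x, i)` the recursion of `μ` gives `∑_{v ≤ w} μ(0̂, v) = -1`. Summing over the
`s(x) + 1` levels `i` of a face `x`, each `(y, j)` with `y` a face of `x` is counted
`s(x) - s(y) + 1` times, so `g(y) := ∑_j μ(0̂, (y, j))` satisfies
`∑_{y ⊆ x} (s(x) - s(y) + 1) g(y) = -(s(x) + 1)`. As `s(x) - s(y)` counts the stars of `x`
that are fixed in `y`, the face sums `h(x) := ∑_{y ⊆ x} g(y)` satisfy
`h(x) + ∑_c (h(x[c := 0]) + h(x[c := 1])) = -(s(x) + 1)`, the sum running over the stars `c`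
of `x`. This is the recursion `U(s) = -2s U(s - 1) + (s + 1)` of `U := cubeReesSum`, so
`h(x) = -U(s(x))`, and `μ(0̂, 1̂) = -1 - h(*⋯*) = -1 + U(n)`.
-/

open Finset Function

section Cube

variable {n : ℕ}

def IsFaceOf (y x : Fin n → Fin 3) : Prop := ∀ c, x c = y c ∨ x c = 2

instance : DecidableRel (IsFaceOf (n := n)) := fun _ _ => by unfold IsFaceOf; infer_instance

lemma IsFaceOf.eq_two {y x : Fin n → Fin 3} (h : IsFaceOf y x) {c : Fin n} (hc : y c = 2) :
    x c = 2 := by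
  rcases h c with h | h <;> simp [h, hc]

lemma IsFaceOf.starCount_add_card {y x : Fin n → Fin 3} (h : IsFaceOf y x) :
    starCount y + #{c | x c = 2 ∧ y c ≠ 2} = starCount x := by
  rw [starCount, starCount, ← card_filter_add_card_filter_not (s := {c | x c = 2})
    (fun c => y c = 2), filter_filter, filter_filter]
  congr 3
  ext c
  exact ⟨fun hc => ⟨h.eq_two hc, hc⟩, And.right⟩

lemma IsFaceOf.starCount_le {y x : Fin n → Fin 3} (h : IsFaceOf y x) :
    starCount y ≤ starCount x :=
  h.starCount_add_card ▸ Nat.le_add_right _ _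

lemma starCount_le (x : Fin n → Fin 3) : starCount x ≤ n :=
  (card_filter_le _ _).trans_eq (card_fin n)

lemma isFaceOf_update_iff {x y : Fin n → Fin 3} {c : Fin n} (hx : x c = 2) {b : Fin 3}
    (hb : b ≠ 2) : IsFaceOf y (update x c b) ↔ IsFaceOf y x ∧ y c = b := by
  constructor
  · intro h
    refine ⟨fun d => ?_, ?_⟩
    · rcases eq_or_ne d c with rfl | hd
      · exact Or.inr hx
      · simpa [update_of_ne hd] using h d
    · simpa [hb, eq_comm] using h c
  · rintro ⟨h, rfl⟩ d
    rcases eq_or_ne d c with rfl | hd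
    · simp
    · simpa [update_of_ne hd] using h d

lemma starCount_update_add_one {x : Fin n → Fin 3} {c : Fin n} (hx : x c = 2) {b : Fin 3}
    (hb : b ≠ 2) : starCount (update x c b) + 1 = starCount x := by
  have : ({d | update x c b d = 2} : Finset (Fin n)) = ({d | x d = 2} : Finset _).erase c := by
    ext d
    rcases eq_or_ne d c with rfl | hd <;> simp [*]
  rw [starCount, starCount, this, card_erase_add_one (by simpa using hx)]

def faceSum (g : (Fin n → Fin 3) → ℤ) (x : Fin n → Fin 3) : ℤ := ∑ y with IsFaceOf y x, g y

lemma sum_isFaceOf_starCount_sub_mul (g : (Fin n → Fin 3) → ℤ) (x : Fin n → Fin 3) :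
    ∑ y with IsFaceOf y x, ((starCount x : ℤ) - starCount y) * g y =
      ∑ c with x c = 2, (faceSum g (update x c 0) + faceSum g (update x c 1)) := by
  calc ∑ y with IsFaceOf y x, ((starCount x : ℤ) - starCount y) * g y
      = ∑ y with IsFaceOf y x, ∑ c with x c = 2, if y c ≠ 2 then g y else 0 := by
        refine sum_congr rfl fun y hy => ?_
        rw [← (mem_filter.1 hy).2.starCount_add_card, sum_ite, sum_const_zero, add_zero,
          sum_const, filter_filter, nsmul_eq_mul]
        push_cast
        ring
    _ = ∑ c with x c = 2, ∑ y with IsFaceOf y x ∧ y c ≠ 2, g y := by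
        rw [sum_comm]
        refine sum_congr rfl fun c _ => ?_
        rw [sum_ite, sum_const_zero, add_zero, filter_filter]
    _ = _ := by
        refine sum_congr rfl fun c hc => ?_
        have hx : x c = 2 := (mem_filter.1 hc).2
        have hface (b : Fin 3) (hb : b ≠ 2) :
            faceSum g (update x c b) = ∑ y with IsFaceOf y x ∧ y c = b, g y := by
          rw [faceSum]
          congr 1
          ext y
          simp [isFaceOf_update_iff hx hb]
        rw [hface 0 (by decide), hface 1 (by decide),
          ← sum_filter_add_sum_filter_not _ (fun y => y c = 0), filter_filter, filter_filter]
        have hv : ∀ v : Fin 3, (v ≠ 2 ∧ v = 0 ↔ v = 0) ∧ (v ≠ 2 ∧ ¬v = 0 ↔ v = 1) := by decide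
        congr 2 <;> ext y <;> simp only [mem_filter, mem_univ, true_and, and_assoc, hv]

def cubeReesSum (n : ℕ) : ℤ :=
  ∑ i ∈ range (n + 1),
    (-1) ^ (n - i) * 2 ^ (n - i) * (n.choose i : ℤ) * (i + 1 : ℤ) * ((n - i).factorial : ℤ)

lemma cubeReesSum_zero : cubeReesSum 0 = 1 := by simp [cubeReesSum]

lemma cubeReesSum_succ (s : ℕ) :
    cubeReesSum (s + 1) = -2 * (s + 1) * cubeReesSum s + (s + 2) := by
  rw [cubeReesSum, sum_range_succ, cubeReesSum, mul_sum]
  congr 1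
  · refine sum_congr rfl fun i hi => ?_
    have hi : i ≤ s := Nat.lt_succ_iff.1 (mem_range.1 hi)
    have hchoose : ((s + 1).choose i : ℤ) * ((s - i : ℕ) + 1) = s.choose i * (s + 1) := by
      have := Nat.choose_mul_succ_eq s i
      rw [Nat.succ_sub hi] at this
      exact_mod_cast this.symm
    rw [Nat.succ_sub hi, Nat.factorial_succ, pow_succ, pow_succ]
    push_cast
    linear_combination
      -2 * (-1) ^ (s - i) * 2 ^ (s - i) * ((i : ℤ) + 1) * ((s - i).factorial : ℤ) * hchoose
  · simp only [Nat.sub_self, pow_zero, Nat.choose_self, Nat.factorial_zero]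
    push_cast
    ring

lemma faceSum_eq_neg_cubeReesSum (g : (Fin n → Fin 3) → ℤ)
    (hg : ∀ x, ∑ y with IsFaceOf y x, ((starCount x : ℤ) - starCount y + 1) * g y =
      -(starCount x + 1)) (x : Fin n → Fin 3) :
    faceSum g x = -cubeReesSum (starCount x) := by
  have hrec (x : Fin n → Fin 3) : faceSum g x +
      ∑ c with x c = 2, (faceSum g (update x c 0) + faceSum g (update x c 1)) =
        -(starCount x + 1) := by
    rw [← sum_isFaceOf_starCount_sub_mul, faceSum, ← sum_add_distrib, ← hg x]
    exact sum_congr rfl fun y _ => by ring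
  induction hk : starCount x generalizing x with
  | zero =>
    have hempty : ({c | x c = 2} : Finset (Fin n)) = ∅ := card_eq_zero.1 hk
    simpa [hempty, hk, cubeReesSum_zero] using hrec x
  | succ k ih =>
    have hface {c : Fin n} (hc : x c = 2) {b : Fin 3} (hb : b ≠ 2) :
        faceSum g (update x c b) = -cubeReesSum k :=
      ih _ (by have := starCount_update_add_one hc hb; omega)
    have hfaces : ∑ c with x c = 2, (faceSum g (update x c 0) + faceSum g (update x c 1)) =
        (k + 1) * (-2 * cubeReesSum k) := by
      rw [sum_congr rfl fun c hc => by
        rw [hface (mem_filter.1 hc).2 (b := 0) (by decide),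
          hface (mem_filter.1 hc).2 (b := 1) (by decide)]]
      rw [sum_const, nsmul_eq_mul, ← starCount, hk]
      push_cast
      ring
    have := hrec x
    rw [hfaces, hk] at this
    rw [cubeReesSum_succ]
    push_cast at this ⊢
    linarith

end Cube

section Mobius

variable {α M : Type*} [Fintype α]

lemma WithBotTop.sum_univ [AddCommMonoid M] (f : WithBotTop α → M) :
    ∑ z, f z = f ⊥ + (f ⊤ + ∑ a : α, f a) := by
  rw [show ∑ z, f z = f ⊥ + ∑ z : WithTop α, f z from Fintype.sum_option f,
    show ∑ z : WithTop α, f z = f ⊤ + ∑ a : α, f a from Fintype.sum_option _]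

variable [PartialOrder α]

lemma sum_le_mu_bot_eq_neg_one [DecidableLE α] (mu : WithBotTop α → WithBotTop α → ℤ)
    (hmu_refl : ∀ x, mu x x = 1) (hmu_rec : ∀ x y, x < y → ∑ᶠ z ∈ Set.Icc x y, mu x z = 0)
    (y : α) :
    ∑ a with a ≤ y, mu ⊥ a = -1 := by
  have := hmu_rec ⊥ y (WithBotTop.coe_ne_bot y).bot_lt
  rw [finsum_mem_def, finsum_eq_sum_of_fintype, WithBotTop.sum_univ] at this
  simp only [Set.indicator_apply, Set.mem_Icc, bot_le, true_and, le_top, hmu_refl,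
    WithBotTop.coe_le_coe, top_le_iff, WithBotTop.coe_ne_top, if_true, if_false, zero_add,
    ← sum_filter] at this
  linarith

lemma mu_bot_top_eq_neg_one_sub_sum (mu : WithBotTop α → WithBotTop α → ℤ)
    (hmu_refl : ∀ x, mu x x = 1) (hmu_rec : ∀ x y, x < y → ∑ᶠ z ∈ Set.Icc x y, mu x z = 0) :
    mu ⊥ ⊤ = -1 - ∑ a : α, mu ⊥ a := by
  have := hmu_rec ⊥ ⊤ bot_lt_top
  rw [finsum_mem_def, finsum_eq_sum_of_fintype, WithBotTop.sum_univ] at this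
  simp only [Set.Icc_top, Set.Ici_bot, Set.mem_univ, Set.indicator_of_mem, hmu_refl] at this
  linarith

end Mobius

namespace CubeReesElt

variable {n : ℕ}

instance : Finite (CubeReesElt n) :=
  Finite.of_injective
    (fun z => (z.1.1, (⟨z.1.2, by have := starCount_le z.1.1; have := z.2.2; omega⟩ : Fin (n + 2))))
    fun a b h => by
      simp only [Prod.mk.injEq, Fin.mk.injEq] at h
      exact Subtype.ext (Prod.ext h.1 h.2)

noncomputable instance : Fintype (CubeReesElt n) := Fintype.ofFinite _

lemma le_iff {w z : CubeReesElt n} : w ≤ z ↔ IsFaceOf w.1.1 z.1.1 ∧ w.1.2 ≤ z.1.2 ∧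
    z.1.2 + starCount w.1.1 ≤ w.1.2 + starCount z.1.1 := Iff.rfl

instance : DecidableLE (CubeReesElt n) := fun _ _ => decidable_of_iff _ le_iff.symm

lemma card_filter_level_mem_Icc (x : Fin n → Fin 3) {a b : ℕ} (ha : 1 ≤ a)
    (hb : b ≤ starCount x + 1) :
    #{z : CubeReesElt n | z.1.1 = x ∧ z.1.2 ∈ Icc a b} = b + 1 - a := by
  rw [← Nat.card_Icc a b]
  refine card_bij' (fun z _ => z.1.2) (fun i hi => ⟨(x, i),
    show 1 ≤ i ∧ i ≤ starCount x + 1 by have := mem_Icc.1 hi; omega⟩) ?_ ?_ ?_ ?_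
  · intro z hz
    exact (mem_filter.1 hz).2.2
  · intro i hi
    exact mem_filter.2 ⟨mem_univ _, rfl, hi⟩
  · intro z hz
    exact Subtype.ext (Prod.ext (mem_filter.1 hz).2.1.symm rfl)
  · intro i hi
    rfl

lemma card_filter_fiber_le (w : CubeReesElt n) {x : Fin n → Fin 3} (hw : IsFaceOf w.1.1 x) :
    #{z : CubeReesElt n | z.1.1 = x ∧ w ≤ z} = starCount x + 1 - starCount w.1.1 := by
  have hs := hw.starCount_le
  have hlevel := w.2
  rw [show starCount x + 1 - starCount w.1.1 =
      w.1.2 + starCount x - starCount w.1.1 + 1 - w.1.2 by omega,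
    ← card_filter_level_mem_Icc x hlevel.1 (by omega)]
  congr 1
  ext z
  simp only [mem_filter, mem_univ, true_and, mem_Icc, le_iff]
  constructor
  · rintro ⟨rfl, -, h⟩
    exact ⟨rfl, h.1, by omega⟩
  · rintro ⟨rfl, h⟩
    exact ⟨rfl, hw, by omega⟩

lemma card_filter_fiber (x : Fin n → Fin 3) :
    #{z : CubeReesElt n | z.1.1 = x} = starCount x + 1 := by
  rw [← Nat.add_sub_cancel (starCount x + 1) 1, ← card_filter_level_mem_Icc x le_rfl le_rfl]
  congr 1
  ext z
  simp only [mem_filter, mem_univ, true_and, mem_Icc]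
  constructor
  · rintro rfl
    exact ⟨rfl, z.2⟩
  · exact And.left

lemma sum_isFaceOf_starCount_sub_add_one_mul (f : CubeReesElt n → ℤ) (hf : ∀ z, ∑ w with w ≤ z, f w = -1)
    (x : Fin n → Fin 3) :
    ∑ w with IsFaceOf w.1.1 x, ((starCount x : ℤ) - starCount w.1.1 + 1) * f w =
      -(starCount x + 1) := by
  calc ∑ w with IsFaceOf w.1.1 x, ((starCount x : ℤ) - starCount w.1.1 + 1) * f w
      = ∑ w with IsFaceOf w.1.1 x, ∑ z with z.1.1 = x ∧ w ≤ z, f w := by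
        refine sum_congr rfl fun w hw => ?_
        have hw := (mem_filter.1 hw).2
        rw [sum_const, card_filter_fiber_le w hw, nsmul_eq_mul,
          Nat.sub_add_comm hw.starCount_le]
        push_cast [hw.starCount_le]
        ring
    _ = ∑ z with z.1.1 = x, ∑ w with w ≤ z, f w := by
        refine sum_comm' fun w z => ?_
        simp only [mem_filter, mem_univ, true_and]
        constructor
        · rintro ⟨-, rfl, h⟩
          exact ⟨h, rfl⟩
        · rintro ⟨h, rfl⟩
          exact ⟨(le_iff.1 h).1, rfl, h⟩
    _ = -(starCount x + 1) := by
        rw [sum_congr rfl fun z _ => hf z, sum_const, card_filter_fiber]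
        simp

lemma sum_isFaceOf_eq_sum_fiber (F : (Fin n → Fin 3) → ℤ) (f : CubeReesElt n → ℤ)
    (x : Fin n → Fin 3) :
    ∑ w with IsFaceOf w.1.1 x, F w.1.1 * f w =
      ∑ y with IsFaceOf y x, F y * ∑ w with w.1.1 = y, f w := by
  calc ∑ w with IsFaceOf w.1.1 x, F w.1.1 * f w
      = ∑ w with w.1.1 ∈ ({y | IsFaceOf y x} : Finset _), F w.1.1 * f w := by
        simp only [mem_filter, mem_univ, true_and]
    _ = ∑ y with IsFaceOf y x, ∑ w with w.1.1 = y, F w.1.1 * f w :=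
        (sum_fiberwise_eq_sum_filter _ _ _ _).symm
    _ = ∑ y with IsFaceOf y x, F y * ∑ w with w.1.1 = y, f w := by
        refine sum_congr rfl fun y _ => ?_
        rw [mul_sum]
        exact sum_congr rfl fun w hw => by rw [(mem_filter.1 hw).2]

lemma sum_eq_neg_cubeReesSum (f : CubeReesElt n → ℤ) (hf : ∀ z, ∑ w with w ≤ z, f w = -1) :
    ∑ w, f w = -cubeReesSum n := by
  have hfaces := faceSum_eq_neg_cubeReesSum (fun y => ∑ w with w.1.1 = y, f w)
    (fun x => by
      rw [← sum_isFaceOf_eq_sum_fiber (fun y => (starCount x : ℤ) - starCount y + 1)]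
      exact sum_isFaceOf_starCount_sub_add_one_mul f hf x)
    (fun _ => 2)
  have hall : starCount (fun _ : Fin n => (2 : Fin 3)) = n := by simp [starCount]
  rw [hall, faceSum] at hfaces
  rw [← hfaces, filter_true_of_mem fun y _ c => Or.inr rfl]
  exact (sum_fiberwise _ _ _).symm

end CubeReesElt

theorem statement11_general (n : ℕ)
    (mu : CubeRees n → CubeRees n → ℤ)
    (hmu_refl : ∀ x, mu x x = 1)
    (hmu_rec : ∀ x y : CubeRees n, x < y → ∑ᶠ z ∈ Set.Icc x y, mu x z = 0) :
    mu ⊥ ⊤ = -1 + ∑ i ∈ Finset.range (n + 1),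
      (-1) ^ (n - i) * 2 ^ (n - i) * (n.choose i : ℤ) * (i + 1 : ℤ) *
        ((n - i).factorial : ℤ) := by
  rw [mu_bot_top_eq_neg_one_sub_sum mu hmu_refl hmu_rec, CubeReesElt.sum_eq_neg_cubeReesSum _
    (sum_le_mu_bot_eq_neg_one mu hmu_refl hmu_rec), cubeReesSum, sub_neg_eq_add]

theorem statement11 (n : ℕ) (hn : 1 ≤ n)
    (mu : CubeRees n → CubeRees n → ℤ)
    (hmu_refl : ∀ x, mu x x = 1)
    (hmu_rec : ∀ x y : CubeRees n, x < y → ∑ᶠ z ∈ Set.Icc x y, mu x z = 0) :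
    mu ⊥ ⊤ = -1 + ∑ i ∈ Finset.range (n + 1),
      (-1) ^ (n - i) * 2 ^ (n - i) * (n.choose i : ℤ) * (i + 1 : ℤ) *
        ((n - i).factorial : ℤ) :=
  statement11_general n mu hmu_refl hmu_rec
end

section
/- For every n ≥ 0, the signed derangement number D_n^± is the nearest integer to 2^n · n! / √e; that is, |D_n^± − 2^n · n! / √e| < 1/2, where e is Euler's number. -/
/-!
Inclusion–exclusion over the set of indices forced to be fixed points gives
`D_n^± = ∑_k (-1)^k C(n,k) (n-k)! 2^(n-k) = 2^n n! ∑_{k ≤ n} (-1/2)^k / k!`,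
which is `2^n n!` times a truncation of the series of `e^(-1/2) = 1/√e`. The remainder bound
for the exponential series makes the error at most `(n+2) / (2(n+1)^2) < 1/2` once `n ≥ 1`;
for `n = 0` it is `1 - e^(-1/2) ∈ (0, 1/2)`.
-/

/-- The signed derangement number `D_m^±`: the number of signed permutations
`(σ, ε)` on `m` elements with no fixed point, where an index `i` is a fixed point
if `σ(i) = i` and `ε(i) = +1` (encoded as `true`). -/
noncomputable def signedDerangementCount (m : ℕ) : ℕ :=
  Nat.card {p : Equiv.Perm (Fin m) × (Fin m → Bool) //
    ∀ i, ¬(p.1 i = i ∧ p.2 i = true)}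

open Equiv Finset Nat Real

section SignedPermutations

variable {α : Type*} [Fintype α] [DecidableEq α]

lemma card_perm_fixing (t : Finset α) :
    #{σ : Perm α | ∀ i ∈ t, σ i = i} = (Fintype.card α - #t)! := by
  have e : {σ : Perm α // ∀ i ∈ t, σ i = i} ≃ Perm {x // x ∉ t} :=
    (subtypeEquivRight fun σ => by simp).trans (Perm.subtypeEquivSubtypePerm (· ∉ t)).symm
  rw [← Fintype.card_subtype, Fintype.card_congr e, Fintype.card_perm,
    Fintype.card_subtype_compl, Fintype.card_coe]

lemma card_fun_bool_eq_true_on (t : Finset α) :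
    #{ε : α → Bool | ∀ i ∈ t, ε i = true} = 2 ^ (Fintype.card α - #t) := by
  have hpi : ({ε | ∀ i ∈ t, ε i = true} : Finset (α → Bool)) =
      Fintype.piFinset fun i => if i ∈ t then {true} else univ := by
    ext ε
    simp only [mem_filter, mem_univ, true_and, Fintype.mem_piFinset]
    refine forall_congr' fun i => ?_
    split_ifs <;> simp [*]
  rw [hpi, Fintype.card_piFinset]
  simp [apply_ite, prod_ite, filter_not, card_univ_sdiff]

def signedPermsFixing (i : α) : Finset (Perm α × (α → Bool)) :=
  {p | p.1 i = i ∧ p.2 i = true}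

lemma card_inf_signedPermsFixing (t : Finset α) :
    #(t.inf signedPermsFixing) = (Fintype.card α - #t)! * 2 ^ (Fintype.card α - #t) := by
  have hprod : t.inf signedPermsFixing =
      ({σ : Perm α | ∀ i ∈ t, σ i = i} : Finset _) ×ˢ
        ({ε : α → Bool | ∀ i ∈ t, ε i = true} : Finset _) := by
    ext p
    simp [signedPermsFixing, mem_inf, forall_and]
  rw [hprod, card_product, card_perm_fixing, card_fun_bool_eq_true_on]

lemma card_signedDerangements :
    (Nat.card {p : Perm α × (α → Bool) // ∀ i, ¬(p.1 i = i ∧ p.2 i = true)} : ℤ) =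
      ∑ k ∈ range (Fintype.card α + 1), (-1 : ℤ) ^ k * (Fintype.card α).choose k *
        ((Fintype.card α - k)! * 2 ^ (Fintype.card α - k)) := by
  have hcompl : Nat.card {p : Perm α × (α → Bool) // ∀ i, ¬(p.1 i = i ∧ p.2 i = true)} =
      #((univ : Finset α).inf fun i => (signedPermsFixing i)ᶜ) := by
    rw [Nat.card_eq_fintype_card, Fintype.card_subtype]
    congr 1
    ext p
    simp [signedPermsFixing, mem_inf]
  rw [hcompl, inclusion_exclusion_card_inf_compl]
  simp_rw [card_inf_signedPermsFixing]
  rw [sum_powerset_apply_card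
    (fun k => (-1) ^ k * (((Fintype.card α - k)! * 2 ^ (Fintype.card α - k) : ℕ) : ℤ)),
    Finset.card_univ]
  simp [mul_assoc, mul_left_comm]

end SignedPermutations

noncomputable def expPartialSum (x : ℝ) (n : ℕ) : ℝ :=
  ∑ k ∈ range (n + 1), x ^ k / k !

lemma signedDerangementCount_eq (n : ℕ) :
    (signedDerangementCount n : ℝ) = 2 ^ n * n ! * expPartialSum (-(1 / 2)) n := by
  have h := card_signedDerangements (α := Fin n)
  rw [Fintype.card_fin] at h
  rw [signedDerangementCount, ← Int.cast_natCast, h, expPartialSum, mul_sum]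
  push_cast
  refine sum_congr rfl fun k hk => ?_
  have hkn : k ≤ n := Nat.lt_succ_iff.mp (mem_range.mp hk)
  have hchoose : (n.choose k * k ! * (n - k)! : ℝ) = n ! := by
    exact_mod_cast choose_mul_factorial_mul_factorial hkn
  have hpow : (2 : ℝ) ^ (n - k) * 2 ^ k = 2 ^ n := by rw [← pow_add, Nat.sub_add_cancel hkn]
  rw [show (-(1 / 2) : ℝ) = -1 / 2 by norm_num, div_pow, ← hchoose, ← hpow]
  field_simp

lemma two_pow_mul_factorial_mul_abs_expPartialSum_sub_exp_le (n : ℕ) :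
    2 ^ n * n ! * |expPartialSum (-(1 / 2)) n - exp (-(1 / 2))| ≤
      (n + 2) / (2 * (n + 1) ^ 2) := by
  have habs : |(-(1 / 2) : ℝ)| = 1 / 2 := by norm_num [abs_of_pos]
  have hrem := Real.exp_bound (x := -(1 / 2)) (by rw [habs]; norm_num) n.succ_pos
  rw [habs, abs_sub_comm] at hrem
  calc 2 ^ n * n ! * |expPartialSum (-(1 / 2)) n - exp (-(1 / 2))|
      ≤ 2 ^ n * n ! * ((1 / 2) ^ (n + 1) * ((n + 1).succ / ((n + 1)! * (n + 1 : ℕ)))) := by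
        gcongr
        exact hrem
    _ = (n + 2) / (2 * (n + 1) ^ 2) := by
        rw [factorial_succ, one_div, inv_pow]
        push_cast
        field_simp
        ring

theorem statement15 (n : ℕ) :
    |(signedDerangementCount n : ℝ) -
      2 ^ n * (n.factorial : ℝ) / Real.sqrt (Real.exp 1)| < 1 / 2 := by
  have hsplit : (signedDerangementCount n : ℝ) - 2 ^ n * n ! / √(exp 1) =
      2 ^ n * n ! * (expPartialSum (-(1 / 2)) n - exp (-(1 / 2))) := by
    rw [signedDerangementCount_eq, ← exp_half, exp_neg]
    ring
  rw [hsplit]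
  rcases n.eq_zero_or_pos with rfl | hn
  · have hlower : 1 / 2 < exp (-(1 / 2)) := by
      linarith [add_one_lt_exp (x := -(1 / 2)) (by norm_num)]
    have hupper : exp (-(1 / 2)) < 1 := exp_lt_one_iff.mpr (by norm_num)
    rw [abs_lt]
    norm_num [expPartialSum]
    constructor <;> linarith
  · have hn' : (1 : ℝ) ≤ n := mod_cast hn
    calc |2 ^ n * n ! * (expPartialSum (-(1 / 2)) n - exp (-(1 / 2)))|
        = 2 ^ n * n ! * |expPartialSum (-(1 / 2)) n - exp (-(1 / 2))| := by
          rw [abs_mul, abs_of_pos (by positivity)]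
      _ ≤ (n + 2) / (2 * (n + 1) ^ 2) := two_pow_mul_factorial_mul_abs_expPartialSum_sub_exp_le n
      _ < 1 / 2 := by
          rw [div_lt_div_iff₀ (by positivity) (by norm_num)]
          nlinarith
end

section
/- For every n ≥ 1, the derangement number satisfies D_n = Σ_c (n! / (c_1!·c_2!⋯c_k!)) · Π_{i=1}^{k} (c_i − 1), where the sum ranges over all compositions c = (c_1,…,c_k) of n all of whose parts satisfy c_i ≥ 2 (for n = 1 the sum is empty and D_1 = 0). -/
/-- The derangement number `D_m`: the number of permutations of `{1,…,m}` with
no fixed point. -/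
noncomputable def derangementCount (m : ℕ) : ℕ :=
  Nat.card {σ : Equiv.Perm (Fin m) // ∀ i, σ i ≠ i}

/-!
Both sides satisfy `a 0 = 1` and `a (n + 1) = ∑ k ≤ n, C(n+1, k) (n - k) a k`. For the sum over
compositions this is the decomposition by the first part `n + 1 - k`. For derangements it follows
from `∑ k, C(n, k) D_k = n!` (sort permutations by their set of moved points) and
`C(n+1, k) (n + 1 - k) = (n + 1) C(n, k)`.
-/

open Finset Nat Equiv

theorem card_perm_eq_sum_numDerangements (α : Type*) [Fintype α] [DecidableEq α] :
    Fintype.card (Perm α) = ∑ s : Finset α, numDerangements s.card := by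
  rw [← Fintype.card_congr (sigmaFiberEquiv fun σ : Perm α => σ.support), Fintype.card_sigma]
  refine Fintype.sum_congr _ _ fun s => ?_
  rw [← Fintype.card_coe s, ← card_derangements_eq_numDerangements]
  refine Fintype.card_congr
    ((derangements.subtypeEquiv (· ∈ s)).trans (subtypeEquivRight fun σ => ?_)).symm
  simp only [Finset.ext_iff, Perm.mem_support, Function.mem_fixedPoints, Function.IsFixedPt]
  exact forall_congr' fun a => by tauto

theorem sum_choose_mul_numDerangements (n : ℕ) :
    ∑ k ∈ range (n + 1), n.choose k * numDerangements k = n ! := by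
  have h := card_perm_eq_sum_numDerangements (Fin n)
  rw [Fintype.card_perm, Fintype.card_fin, ← powerset_univ, sum_powerset_apply_card,
    Finset.card_fin] at h
  simpa using h.symm

theorem numDerangements_succ_eq_sum (n : ℕ) :
    numDerangements (n + 1) =
      ∑ k ∈ range (n + 1), (n + 1).choose k * (n - k) * numDerangements k := by
  have hsucc : ∑ k ∈ range (n + 1), (n + 1).choose k * (n + 1 - k) * numDerangements k
      = (n + 1)! := by
    simp_rw [← choose_mul_succ_eq, mul_comm _ (n + 1), mul_assoc, ← mul_sum,
      sum_choose_mul_numDerangements, factorial_succ]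
  have hsplit : ∑ k ∈ range (n + 1), (n + 1).choose k * (n + 1 - k) * numDerangements k
      = ∑ k ∈ range (n + 1), (n + 1).choose k * (n - k) * numDerangements k
        + ∑ k ∈ range (n + 1), (n + 1).choose k * numDerangements k := by
    rw [← sum_add_distrib]
    refine sum_congr rfl fun k hk => ?_
    rw [show n + 1 - k = n - k + 1 by have := mem_range.1 hk; omega]
    ring
  have hall := sum_choose_mul_numDerangements (n + 1)
  rw [sum_range_succ, choose_self, one_mul] at hall
  omega

theorem List.prod_map_factorial_dvd_factorial_sum (l : List ℕ) :
    (l.map factorial).prod ∣ l.sum ! := by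
  induction l with
  | nil => simp
  | cons a l ih =>
    simpa only [List.map_cons, List.prod_cons, List.sum_cons] using
      (mul_dvd_mul_left _ ih).trans (factorial_mul_factorial_dvd_factorial_add a l.sum)

namespace Composition

def consEquiv (n : ℕ) : (Σ k : Fin (n + 1), Composition k) ≃ Composition (n + 1) where
  toFun p := ⟨(n + 1 - p.1) :: p.2.blocks, by
      simp only [List.mem_cons, forall_eq_or_imp]
      exact ⟨by omega, fun _ => p.2.blocks_pos⟩, by
      simp only [List.sum_cons, p.2.blocks_sum]; omega⟩
  -- indexing by the sum of the remaining parts makes `blocks_sum` hold by `rfl`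
  invFun c := ⟨⟨c.blocks.tail.sum, by
      obtain ⟨b, t, hbt⟩ := List.exists_cons_of_ne_nil (c.blocks_eq_nil.not.2 n.succ_ne_zero)
      have := c.blocks_sum
      have := c.blocks_pos (hbt ▸ List.mem_cons_self)
      simp only [hbt, List.sum_cons, List.tail_cons] at *
      omega⟩, ⟨c.blocks.tail, fun h => c.blocks_pos (List.mem_of_mem_tail h), rfl⟩⟩
  left_inv := by
    rintro ⟨⟨k, hk⟩, ⟨b, hb, hsum⟩⟩
    obtain rfl : b.sum = k := hsum
    rfl
  right_inv := by
    rintro ⟨_ | ⟨b, t⟩, hb, hsum⟩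
    · simp at hsum
    · ext1
      simp only [List.tail_cons, List.cons.injEq, and_true]
      simp only [List.sum_cons] at hsum
      omega

theorem sum_blocks_succ {M : Type*} [AddCommMonoid M] (n : ℕ) (f : List ℕ → M) :
    ∑ c : Composition (n + 1), f c.blocks
      = ∑ k ∈ range (n + 1), ∑ c : Composition k, f ((n + 1 - k) :: c.blocks) := by
  rw [← (consEquiv n).sum_comp, Fintype.sum_sigma]
  exact Fin.sum_univ_eq_sum_range (fun k => ∑ c : Composition k, f ((n + 1 - k) :: c.blocks)) _

end Composition

theorem factorial_div_prod_factorial_cons {k n : ℕ} (l : List ℕ) (hl : l.sum = k)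
    (hk : k ≤ n) :
    n ! / (((n - k) :: l).map factorial).prod = n.choose k * (k ! / (l.map factorial).prod) := by
  obtain ⟨q, hq⟩ := hl ▸ l.prod_map_factorial_dvd_factorial_sum
  have hP : 0 < (l.map factorial).prod :=
    List.prod_pos fun x hx => by obtain ⟨a, -, rfl⟩ := List.mem_map.1 hx; exact factorial_pos a
  have hn : n ! = ((n - k)! * (l.map factorial).prod) * (n.choose k * q) := by
    rw [← choose_mul_factorial_mul_factorial hk, hq]; ring
  rw [List.map_cons, List.prod_cons, hn, Nat.mul_div_cancel_left _ (by positivity), hq,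
    Nat.mul_div_cancel_left _ hP]

def compositionSum (n : ℕ) : ℕ :=
  ∑ c : Composition n, n ! / (c.blocks.map factorial).prod * (c.blocks.map (· - 1)).prod

theorem compositionSum_zero : compositionSum 0 = 1 := by
  decide

theorem compositionSum_succ (n : ℕ) :
    compositionSum (n + 1) =
      ∑ k ∈ range (n + 1), (n + 1).choose k * (n - k) * compositionSum k := by
  rw [compositionSum, Composition.sum_blocks_succ n
    fun l => (n + 1)! / (l.map factorial).prod * (l.map (· - 1)).prod]
  refine sum_congr rfl fun k hk => ?_
  rw [compositionSum, mul_sum]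
  refine sum_congr rfl fun c _ => ?_
  rw [factorial_div_prod_factorial_cons _ c.blocks_sum (mem_range.1 hk).le]
  simp only [List.map_cons, List.prod_cons, show n + 1 - k - 1 = n - k by omega]
  ring

theorem compositionSum_eq_numDerangements (n : ℕ) : compositionSum n = numDerangements n := by
  induction n using Nat.strong_induction_on with
  | _ n ih =>
    rcases n with _ | n
    · exact compositionSum_zero
    · rw [compositionSum_succ, numDerangements_succ_eq_sum]
      exact sum_congr rfl fun k hk => by rw [ih k (mem_range.1 hk)]

theorem derangementCount_eq_numDerangements (n : ℕ) : derangementCount n = numDerangements n := by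
  rw [derangementCount, ← card_derangements_fin_eq_numDerangements, ← Nat.card_eq_fintype_card]
  rfl

theorem statement18_general (n : ℕ) :
    derangementCount n =
      ∑ c ∈ Finset.univ.filter (fun c : Composition n => ∀ x ∈ c.blocks, 2 ≤ x),
        (n.factorial / (c.blocks.map Nat.factorial).prod) *
          (c.blocks.map (fun x => x - 1)).prod := by
  rw [derangementCount_eq_numDerangements, ← compositionSum_eq_numDerangements, compositionSum]
  -- a part equal to 1 makes the weight vanish, so the filter changes nothing
  refine (sum_filter_of_ne fun c _ hc x hx => ?_).symm
  have : x - 1 ≠ 0 := fun h =>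
    hc (mul_eq_zero_of_right _ (List.prod_eq_zero (List.mem_map.2 ⟨x, hx, h⟩)))
  omega

theorem statement18 (n : ℕ) (hn : 1 ≤ n) :
    derangementCount n =
      ∑ c ∈ Finset.univ.filter (fun c : Composition n => ∀ x ∈ c.blocks, 2 ≤ x),
        (n.factorial / (c.blocks.map Nat.factorial).prod) *
          (c.blocks.map (fun x => x - 1)).prod :=
  statement18_general n
end

section
/- The exponential generating function of the signed derangement numbers satisfies Σ_{n ≥ 0} D_n^± · x^n / n! = e^{−x} / (1 − 2x) as an identity of formal power series over ℚ; that is, the formal power series with n-th coefficient D_n^±/n! equals the product of the power series exp(−X) with the (multiplicative) inverse of the power series 1 − 2X. -/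
open Equiv Finset PowerSeries

section Counting

variable {α : Type*} [Fintype α] [DecidableEq α]

theorem card_signs_avoiding_fixedPoints (σ : Perm α) :
    Nat.card {ε : α → Bool // ∀ i, ¬(σ i = i ∧ ε i = true)} = 2 ^ #σ.support := by
  have hfactor (i : α) :
      Nat.card {b : Bool // ¬(σ i = i ∧ b = true)} = if i ∈ σ.support then 2 else 1 := by
    by_cases h : σ i = i <;> simp [h, Perm.mem_support]
  rw [Nat.card_congr (subtypePiEquivPi (p := fun i (b : Bool) => ¬(σ i = i ∧ b = true))),
    Nat.card_pi]
  simp only [hfactor, Fintype.prod_ite_mem, prod_const]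

theorem card_perm_support_eq (s : Finset α) :
    #{σ : Perm α | σ.support = s} = numDerangements #s := by
  rw [← Fintype.card_subtype, ← Fintype.card_coe s, ← card_derangements_eq_numDerangements,
    Fintype.card_congr (derangements.subtypeEquiv (· ∈ s))]
  refine Fintype.card_congr (subtypeEquivRight fun σ => ?_)
  simp [Finset.ext_iff, Perm.mem_support, Function.IsFixedPt, not_iff_comm]

theorem card_signedFixedPointFree :
    Nat.card {p : Perm α × (α → Bool) // ∀ i, ¬(p.1 i = i ∧ p.2 i = true)} =
      ∑ k ∈ range (Fintype.card α + 1),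
        (Fintype.card α).choose k * (numDerangements k * 2 ^ k) := by
  calc Nat.card {p : Perm α × (α → Bool) // ∀ i, ¬(p.1 i = i ∧ p.2 i = true)}
      = ∑ σ : Perm α, 2 ^ #σ.support := by
        rw [Nat.card_congr (subtypeProdEquivSigmaSubtype fun (σ : Perm α) (ε : α → Bool) =>
          ∀ i, ¬(σ i = i ∧ ε i = true)), Nat.card_sigma]
        simp only [card_signs_avoiding_fixedPoints]
    _ = ∑ s : Finset α, numDerangements #s * 2 ^ #s := by
        rw [← sum_fiberwise univ Perm.support]
        refine sum_congr rfl fun s _ => ?_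
        rw [sum_congr rfl fun σ hσ => by rw [(mem_filter.1 hσ).2], sum_const, smul_eq_mul,
          card_perm_support_eq]
    _ = _ := by
        rw [← powerset_univ, sum_powerset_apply_card (fun k => numDerangements k * 2 ^ k),
          card_univ]
        simp only [smul_eq_mul]

end Counting

theorem signedDerangementCount_eq_sum (m : ℕ) :
    signedDerangementCount m = ∑ k ∈ range (m + 1), m.choose k * (numDerangements k * 2 ^ k) := by
  rw [signedDerangementCount, card_signedFixedPointFree, Fintype.card_fin]

section EGF

variable (K : Type*) [Field K] [CharZero K]

theorem mk_sum_choose_mul_div_factorial (a : ℕ → K) :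
    mk (fun n => (∑ k ∈ range (n + 1), n.choose k * a k) / n.factorial) =
      mk (fun n => a n / n.factorial) * exp K := by
  ext n
  rw [coeff_mul, Nat.sum_antidiagonal_eq_sum_range_succ_mk, coeff_mk, sum_div]
  refine sum_congr rfl fun k hk => ?_
  have hkn : k ≤ n := Nat.lt_succ_iff.1 (mem_range.1 hk)
  simp only [coeff_mk, coeff_exp, Nat.cast_choose K hkn, map_div₀, map_one, map_natCast]
  field_simp
  rw [mul_assoc, mul_div_mul_left _ _ (by exact_mod_cast n.factorial_ne_zero)]

noncomputable def derangementEGF : K⟦X⟧ :=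
  mk fun n => (numDerangements n : K) / n.factorial

theorem derangementEGF_mul_one_sub_X :
    derangementEGF K * (1 - X) = rescale (-1 : K) (exp K) := by
  ext n
  rw [coeff_rescale, coeff_exp, mul_sub, mul_one, map_sub]
  cases n with
  | zero => simp [derangementEGF]
  | succ n =>
    have hrec : (numDerangements (n + 1) : K) = (n + 1) * numDerangements n - (-1) ^ n := by
      exact_mod_cast congrArg (Int.cast (R := K)) (numDerangements_succ n)
    simp only [coeff_succ_mul_X, derangementEGF, coeff_mk, hrec, Nat.factorial_succ,
      map_div₀, map_one, map_natCast]
    push_cast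
    field_simp
    ring

theorem rescale_derangementEGF_mul_one_sub_C_mul_X (a : K) :
    rescale a (derangementEGF K) * (1 - C a * X) = rescale (-a) (exp K) := by
  have h := congrArg (rescale a) (derangementEGF_mul_one_sub_X K)
  rwa [map_mul, map_sub, map_one, rescale_X, rescale_rescale, neg_one_mul] at h

theorem mk_signedDerangementCount_div_factorial :
    mk (fun n => (signedDerangementCount n : K) / n.factorial) =
      rescale 2 (derangementEGF K) * exp K := by
  simp only [signedDerangementCount_eq_sum]
  push_cast
  rw [mk_sum_choose_mul_div_factorial]
  congr 1
  ext n
  simp only [coeff_mk, coeff_rescale, derangementEGF]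
  ring

end EGF

theorem statement19 :
    PowerSeries.mk (fun n => (signedDerangementCount n : ℚ) / (n.factorial : ℚ)) =
      PowerSeries.rescale (-1 : ℚ) (PowerSeries.exp ℚ) *
        (1 - 2 * PowerSeries.X : PowerSeries ℚ)⁻¹ := by
  rw [eq_mul_inv_iff_mul_eq (by simp), mk_signedDerangementCount_div_factorial, mul_right_comm,
    ← map_ofNat C 2, rescale_derangementEGF_mul_one_sub_C_mul_X,
    show (-1 : ℚ) = -2 + 1 by norm_num, ← exp_mul_exp_eq_exp_add, rescale_one, RingHom.id_apply]
  rfl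
end
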